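/- arXiv:1405.5979 — 8 statements merged into one kernel-verified Lean document; each statement's English description precedes it below -/
import Mathlib

section
/- Every metric matrix A (a symmetric n×n matrix with zero diagonal, nonnegative entries, satisfying all triangle inequalities a_{ij} + a_{jk} ≥ a_{ik}) equals the tropical product, taken in any fixed order, of the lossy phone call matrices C_{kl}(a_{kl}) over all pairs k < l. -/
open scoped ENNReal

/-- Tropical (min-plus) matrix multiplication over [0,∞]. -/
noncomputable def tropMul {n : ℕ} (A B : Matrix (Fin n) (Fin n) ℝ≥0∞) :
    Matrix (Fin n) (Fin n) ℝ≥0∞ :=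
  fun i j => Finset.univ.inf fun k => A i k + B k j

/-- The tropical identity matrix: 0 on the diagonal, ∞ elsewhere. -/
noncomputable def tropId {n : ℕ} : Matrix (Fin n) (Fin n) ℝ≥0∞ :=
  fun i j => if i = j then 0 else ⊤

/-- The lossy phone call matrix C_{kl}(a): zero diagonal, value `a` at
positions (k,l) and (l,k), and ∞ elsewhere. -/
noncomputable def call {n : ℕ} (k l : Fin n) (a : ℝ≥0∞) : Matrix (Fin n) (Fin n) ℝ≥0∞ :=
  fun i j => if i = j then 0 else if (i = k ∧ j = l) ∨ (i = l ∧ j = k) then a else ⊤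

/-- The tropical product of a list of lossy phone call matrices. -/
noncomputable def prodC {n : ℕ} (l : List (Fin n × Fin n × ℝ≥0∞)) : Matrix (Fin n) (Fin n) ℝ≥0∞ :=
  (l.map fun t => call t.1 t.2.1 t.2.2).foldr tropMul tropId

/-!
The `(i, j)` entry of a tropical product of zero-diagonal matrices is the minimum, over all
ways of walking from `i` to `j` by using each factor once (possibly staying put, at cost `0`),
of the total cost. For a metric `A` every such walk through calls `C_{kl}(a_{kl})` costs at
least `a_{ij}` by the triangle inequality, while staying put at every call except `C_{ij}`
costs exactly `a_{ij}`.
-/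

section TropicalProduct

variable {n : ℕ}

lemma tropMul_apply_le (A B : Matrix (Fin n) (Fin n) ℝ≥0∞) (i k j : Fin n) :
    tropMul A B i j ≤ A i k + B k j :=
  Finset.inf_le (Finset.mem_univ k)

lemma tropMul_apply_mono {A A' B B' : Matrix (Fin n) (Fin n) ℝ≥0∞}
    (hA : ∀ i j, A i j ≤ A' i j) (hB : ∀ i j, B i j ≤ B' i j) (i j : Fin n) :
    tropMul A B i j ≤ tropMul A' B' i j :=
  Finset.inf_mono_fun fun k _ => add_le_add (hA i k) (hB k j)

lemma tropMul_apply_le_left (A : Matrix (Fin n) (Fin n) ℝ≥0∞) {B : Matrix (Fin n) (Fin n) ℝ≥0∞}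
    (hB : ∀ i, B i i = 0) (i j : Fin n) : tropMul A B i j ≤ A i j := by
  simpa [hB] using tropMul_apply_le A B i j j

lemma tropMul_apply_le_right {A : Matrix (Fin n) (Fin n) ℝ≥0∞} (hA : ∀ i, A i i = 0)
    (B : Matrix (Fin n) (Fin n) ℝ≥0∞) (i j : Fin n) : tropMul A B i j ≤ B i j := by
  simpa [hA] using tropMul_apply_le A B i i j

lemma le_tropMul_self_apply {A : Matrix (Fin n) (Fin n) ℝ≥0∞}
    (htri : ∀ i j k, A i k ≤ A i j + A j k) (i j : Fin n) : A i j ≤ tropMul A A i j :=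
  Finset.le_inf fun k _ => htri i k j

lemma foldr_tropMul_apply_self {l : List (Matrix (Fin n) (Fin n) ℝ≥0∞)}
    (hl : ∀ M ∈ l, ∀ i, M i i = 0) (i : Fin n) : l.foldr tropMul tropId i i = 0 := by
  induction l with
  | nil => simp [tropId]
  | cons M l ih =>
    rw [List.forall_mem_cons] at hl
    exact le_antisymm ((tropMul_apply_le_right hl.1 _ i i).trans (ih hl.2).le) bot_le

lemma foldr_tropMul_apply_le_of_mem {l : List (Matrix (Fin n) (Fin n) ℝ≥0∞)}
    (hl : ∀ M ∈ l, ∀ i, M i i = 0) {M : Matrix (Fin n) (Fin n) ℝ≥0∞} (hM : M ∈ l)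
    (i j : Fin n) : l.foldr tropMul tropId i j ≤ M i j := by
  induction l with
  | nil => simp at hM
  | cons N l ih =>
    rw [List.forall_mem_cons] at hl
    rcases List.mem_cons.1 hM with rfl | hM
    · exact tropMul_apply_le_left M (foldr_tropMul_apply_self hl.2) i j
    · exact (tropMul_apply_le_right hl.1 _ i j).trans (ih hl.2 hM)

lemma le_foldr_tropMul_apply {A : Matrix (Fin n) (Fin n) ℝ≥0∞} (h0 : ∀ i, A i i = 0)
    (htri : ∀ i j k, A i k ≤ A i j + A j k) {l : List (Matrix (Fin n) (Fin n) ℝ≥0∞)}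
    (hl : ∀ M ∈ l, ∀ i j, A i j ≤ M i j) (i j : Fin n) :
    A i j ≤ l.foldr tropMul tropId i j := by
  induction l generalizing i j with
  | nil =>
    by_cases hij : i = j
    · simp [hij, h0]
    · simp [tropId, hij]
  | cons M l ih =>
    rw [List.forall_mem_cons] at hl
    exact (le_tropMul_self_apply htri i j).trans (tropMul_apply_mono hl.1 (ih hl.2) i j)

end TropicalProduct

section Call

variable {n : ℕ}

lemma call_comm (k l : Fin n) (a : ℝ≥0∞) : call k l a = call l k a := by
  ext i j
  simp only [call, or_comm]

lemma call_apply_self (k l i : Fin n) (a : ℝ≥0∞) : call k l a i i = 0 :=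
  if_pos rfl

lemma call_apply_of_ne {k l : Fin n} (h : k ≠ l) (a : ℝ≥0∞) : call k l a k l = a := by
  simp [call, h]

lemma le_call_apply {A : Matrix (Fin n) (Fin n) ℝ≥0∞} (h0 : ∀ i, A i i = 0)
    (hsymm : ∀ i j, A i j = A j i) (k l i j : Fin n) : A i j ≤ call k l (A k l) i j := by
  unfold call
  split_ifs with hij hkl
  · rw [hij, h0]
  · rcases hkl with ⟨rfl, rfl⟩ | ⟨rfl, rfl⟩
    · exact le_rfl
    · exact (hsymm i j).le
  · exact le_top

end Call

theorem metric_eq_prod_calls_general {n : ℕ} (A : Matrix (Fin n) (Fin n) ℝ≥0∞)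
    (h0 : ∀ i, A i i = 0) (hsymm : ∀ i j, A i j = A j i)
    (htri : ∀ i j k, A i k ≤ A i j + A j k)
    (L : List (Fin n × Fin n)) (hL : ∀ p : Fin n × Fin n, p ∈ L ↔ p.1 < p.2) :
    (L.map fun p => call p.1 p.2 (A p.1 p.2)).foldr tropMul tropId = A := by
  set l := L.map fun p => call p.1 p.2 (A p.1 p.2)
  have hdiag : ∀ M ∈ l, ∀ i, M i i = 0 := by
    simp only [l, List.forall_mem_map]
    exact fun p _ i => call_apply_self p.1 p.2 i _
  have hle : ∀ M ∈ l, ∀ i j, A i j ≤ M i j := by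
    simp only [l, List.forall_mem_map]
    exact fun p _ => le_call_apply h0 hsymm p.1 p.2
  have hcall : ∀ i j, i ≠ j → ∃ M ∈ l, M i j = A i j := by
    intro i j hij
    rcases hij.lt_or_gt with hlt | hgt
    · exact ⟨_, List.mem_map_of_mem ((hL (i, j)).2 hlt), call_apply_of_ne hij _⟩
    · refine ⟨_, List.mem_map_of_mem ((hL (j, i)).2 hgt), ?_⟩
      simp only [call_comm j i, call_apply_of_ne hij, hsymm j i]
  funext i j
  refine le_antisymm ?_ (le_foldr_tropMul_apply h0 htri hle i j)
  rcases eq_or_ne i j with rfl | hij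
  · rw [foldr_tropMul_apply_self hdiag, h0]
  · obtain ⟨M, hM, hMij⟩ := hcall i j hij
    exact hMij ▸ foldr_tropMul_apply_le_of_mem hdiag hM i j

theorem metric_eq_prod_calls {n : ℕ} (A : Matrix (Fin n) (Fin n) ℝ≥0∞)
    (h0 : ∀ i, A i i = 0) (hsymm : ∀ i j, A i j = A j i)
    (htri : ∀ i j k, A i k ≤ A i j + A j k)
    (L : List (Fin n × Fin n)) (hL : ∀ p : Fin n × Fin n, p ∈ L ↔ p.1 < p.2)
    (hnd : L.Nodup) :
    (L.map fun p => call p.1 p.2 (A p.1 p.2)).foldr tropMul tropId = A :=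
  metric_eq_prod_calls_general A h0 hsymm htri L hL
end

section
/- Let A be a tropical product of finitely many lossy phone call matrices C_{i_r,j_r}(b_r) with b_r ∈ [0,∞]. Then for every partition of [n] into nonempty sets K and L, either a_{kl} = a_{lk} = ∞ for all k ∈ K and l ∈ L, or there exist k ∈ K and l ∈ L with a_{kl} = a_{lk} < ∞. Consequently A satisfies a_{ij} = a_{ji} for at least n−1 pairs {i,j} forming a connected graph on [n]. -/
open scoped ENNReal

/-- The graph on [n] whose edges are the pairs {i,j} with a_{ij} = a_{ji}. -/
def symGraph {n : ℕ} (A : Matrix (Fin n) (Fin n) ℝ≥0∞) : SimpleGraph (Fin n) where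
  Adj i j := i ≠ j ∧ A i j = A j i
  symm := by constructor; intro i j h; exact ⟨h.1.symm, h.2.symm⟩
  loopless := by constructor; intro i h; exact h.1 rfl

/-! Fix a cut `K` of `[n]`. Along the product we carry the invariant that the least entry of `A`
across `K`, in either direction, is attained at a symmetric pair. It holds for the identity, where
all these entries are `∞`. Multiplying by `C_{pq}(b)` on the left only lowers entries, and the
entries of row `p` drop to at most `b + a_{qj}`: if `p` and `q` lie on the same side of `K` this is
at least the old minimum, and if they lie on different sides then `a_{pq} = a_{qp} = b` is the new
minimum whenever `b` is below the old one. A symmetric pair across every cut makes the graph of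
symmetric pairs connected. -/

theorem SimpleGraph.preconnected_of_forall_exists_adj {V : Type*} {G : SimpleGraph V}
    (h : ∀ s : Set V, ∀ x ∈ s, ∀ y ∉ s, ∃ x' ∈ s, ∃ y' ∉ s, G.Adj x' y') : G.Preconnected := by
  intro u w
  by_contra huw
  obtain ⟨x, hx, y, hy, hxy⟩ := h {v | G.Reachable u v} u .rfl w huw
  exact hy (hx.trans hxy.reachable)

section Tropical

variable {n : ℕ}

theorem tropMul_le (A B : Matrix (Fin n) (Fin n) ℝ≥0∞) (i j s : Fin n) :
    tropMul A B i j ≤ A i s + B s j :=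
  Finset.inf_le (Finset.mem_univ s)

theorem le_tropMul {A B : Matrix (Fin n) (Fin n) ℝ≥0∞} {i j : Fin n} {c : ℝ≥0∞}
    (h : ∀ s, c ≤ A i s + B s j) : c ≤ tropMul A B i j :=
  Finset.le_inf fun s _ => h s

theorem call_comm_s4 (p q : Fin n) (b : ℝ≥0∞) : call p q b = call q p b := by
  funext i j
  simp only [call, or_comm]

theorem tropMul_call_le (p q : Fin n) (b : ℝ≥0∞) (B : Matrix (Fin n) (Fin n) ℝ≥0∞)
    (i j : Fin n) : tropMul (call p q b) B i j ≤ B i j := by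
  simpa [call] using tropMul_le (call p q b) B i j i

theorem tropMul_call_apply_le {p q : Fin n} (hpq : p ≠ q) (b : ℝ≥0∞)
    {B : Matrix (Fin n) (Fin n) ℝ≥0∞} (hB : B q q = 0) : tropMul (call p q b) B p q ≤ b := by
  simpa [call, hpq, hB] using tropMul_le (call p q b) B p q q

theorem le_tropMul_call {p q : Fin n} {b : ℝ≥0∞} {B : Matrix (Fin n) (Fin n) ℝ≥0∞}
    {i j : Fin n} {c : ℝ≥0∞} (hdiag : c ≤ B i j)
    (hcall : ∀ s, i = p ∧ s = q ∨ i = q ∧ s = p → c ≤ b + B s j) :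
    c ≤ tropMul (call p q b) B i j := by
  refine le_tropMul fun s => ?_
  unfold call
  split_ifs with his hpq
  · simpa [← his] using hdiag
  · exact hcall s hpq
  · simp

theorem prodC_apply_self (l : List (Fin n × Fin n × ℝ≥0∞)) (i : Fin n) : prodC l i i = 0 := by
  induction l with
  | nil => simp [prodC, tropId]
  | cons t l ih => exact le_antisymm (ih ▸ tropMul_call_le _ _ _ _ i i) zero_le

end Tropical

section Separates

variable {α : Type*} {K : Set α} {i j : α}

def Separates (K : Set α) (i j : α) : Prop :=
  i ∈ K ↔ j ∉ K

theorem separates_of_mem_of_notMem (hi : i ∈ K) (hj : j ∉ K) : Separates K i j :=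
  iff_of_true hi hj

theorem Separates.ne (h : Separates K i j) : i ≠ j := by
  rintro rfl
  unfold Separates at h
  tauto

theorem Separates.symm (h : Separates K i j) : Separates K j i := by
  unfold Separates at *
  tauto

end Separates

section SymmCutMin

variable {n : ℕ} {A B : Matrix (Fin n) (Fin n) ℝ≥0∞} {K : Set (Fin n)} {i j : Fin n}

def IsSymmCutMin (A : Matrix (Fin n) (Fin n) ℝ≥0∞) (K : Set (Fin n)) (i j : Fin n) : Prop :=
  Separates K i j ∧ A i j = A j i ∧ ∀ i' j', Separates K i' j' → A i j ≤ A i' j'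

theorem IsSymmCutMin.tropMul_call (hB : IsSymmCutMin B K i j) (hdiag : ∀ k, B k k = 0)
    {p q : Fin n} (hpq : p ≠ q) (b : ℝ≥0∞) :
    ∃ i' j', IsSymmCutMin (tropMul (call p q b) B) K i' j' := by
  obtain ⟨hij, hsymm, hmin⟩ := hB
  have hlow : ∀ i' j', Separates K i' j' → min (B i j) b ≤ tropMul (call p q b) B i' j' :=
    fun i' j' h => le_tropMul_call (min_le_left _ _ |>.trans (hmin i' j' h))
      fun _ _ => (min_le_right _ _).trans le_self_add
  by_cases hnew : Separates K p q ∧ b < B i j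
  · have hb : min (B i j) b = b := min_eq_right hnew.2.le
    have hpq' : tropMul (call p q b) B p q = b :=
      (tropMul_call_apply_le hpq b (hdiag q)).antisymm (hb ▸ hlow p q hnew.1 :)
    have hqp : tropMul (call p q b) B q p = b := by
      rw [call_comm_s4] at hlow ⊢
      exact (tropMul_call_apply_le hpq.symm b (hdiag p)).antisymm (hb ▸ hlow q p hnew.1.symm :)
    exact ⟨p, q, hnew.1, hpq'.trans hqp.symm,
      fun i' j' h => (hpq'.trans hb.symm).trans_le (hlow i' j' h)⟩
  · have hold : ∀ i' j', Separates K i' j' → B i j ≤ tropMul (call p q b) B i' j' := by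
      intro i' j' h
      by_cases hle : B i j ≤ b
      · exact min_eq_left hle ▸ hlow i' j' h
      · have hsame : ¬Separates K p q := fun hpq => hnew ⟨hpq, not_le.mp hle⟩
        refine le_tropMul_call (hmin i' j' h) fun s hs => (hmin s j' ?_).trans le_add_self
        unfold Separates at h hsame ⊢
        rcases hs with ⟨rfl, rfl⟩ | ⟨rfl, rfl⟩ <;> tauto
    have hij' := (tropMul_call_le p q b B i j).antisymm (hold i j hij)
    have hji' := (tropMul_call_le p q b B j i).antisymm (hsymm ▸ hold j i hij.symm)
    exact ⟨i, j, hij, hij'.trans (hsymm.trans hji'.symm), fun i' j' h => hij' ▸ hold i' j' h⟩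

theorem IsSymmCutMin.symm (h : IsSymmCutMin A K i j) : IsSymmCutMin A K j i :=
  ⟨h.1.symm, h.2.1.symm, fun i' j' h' => h.2.1 ▸ h.2.2 i' j' h'⟩

theorem IsSymmCutMin.exists_mem_notMem (h : IsSymmCutMin A K i j) :
    ∃ k ∈ K, ∃ m ∉ K, IsSymmCutMin A K k m := by
  by_cases hi : i ∈ K
  · exact ⟨i, hi, j, h.1.1 hi, h⟩
  · exact ⟨j, not_not.mp (mt h.1.2 hi), i, hi, h.symm⟩

theorem exists_isSymmCutMin_prodC (l : List (Fin n × Fin n × ℝ≥0∞))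
    (hd : ∀ t ∈ l, t.1 ≠ t.2.1) (hij : Separates K i j) :
    ∃ i' j', IsSymmCutMin (prodC l) K i' j' := by
  induction l with
  | nil =>
    have htop : ∀ i' j', Separates K i' j' → prodC [] i' j' = ⊤ := fun i' j' h => by
      simp [prodC, tropId, h.ne]
    exact ⟨i, j, hij, (htop i j hij).trans (htop j i hij.symm).symm,
      fun i' j' h => le_top.trans_eq (htop i' j' h).symm⟩
  | cons t l ih =>
    obtain ⟨i', j', h⟩ := ih fun t' ht' => hd t' (List.mem_cons_of_mem _ ht')
    exact h.tropMul_call (prodC_apply_self l) (hd t List.mem_cons_self) t.2.2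

end SymmCutMin

theorem symmetric_core {n : ℕ} (hn : 1 ≤ n)
    (l : List (Fin n × Fin n × ℝ≥0∞)) (hd : ∀ t ∈ l, t.1 ≠ t.2.1) :
    (∀ K : Finset (Fin n), K.Nonempty → Kᶜ.Nonempty →
      (∀ k ∈ K, ∀ m ∈ Kᶜ, prodC l k m = ⊤ ∧ prodC l m k = ⊤) ∨
      (∃ k ∈ K, ∃ m ∈ Kᶜ, prodC l k m = prodC l m k ∧ prodC l k m ≠ ⊤)) ∧
    (symGraph (prodC l)).Connected := by
  refine ⟨fun K ⟨k, hk⟩ ⟨m, hm⟩ => ?_, ?_⟩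
  · obtain ⟨i, j, hij⟩ := exists_isSymmCutMin_prodC l hd
      (separates_of_mem_of_notMem (K := (K : Set (Fin n))) hk (Finset.mem_compl.mp hm))
    obtain ⟨k, hk, m, hm, -, hsymm, hmin⟩ := hij.exists_mem_notMem
    by_cases htop : prodC l k m = ⊤
    · refine .inl fun k' hk' m' hm' => ⟨?_, ?_⟩ <;> refine top_le_iff.mp (htop ▸ hmin _ _ ?_)
      · exact separates_of_mem_of_notMem hk' (Finset.mem_compl.mp hm')
      · exact (separates_of_mem_of_notMem hk' (Finset.mem_compl.mp hm')).symm
    · exact .inr ⟨k, hk, m, Finset.mem_compl.mpr hm, hsymm, htop⟩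
  · have : Nonempty (Fin n) := ⟨⟨0, hn⟩⟩
    refine ⟨SimpleGraph.preconnected_of_forall_exists_adj fun s x hx y hy => ?_⟩
    obtain ⟨i, j, hij⟩ := exists_isSymmCutMin_prodC l hd (separates_of_mem_of_notMem hx hy)
    obtain ⟨k, hk, m, hm, hsep, hsymm, -⟩ := hij.exists_mem_notMem
    exact ⟨k, hk, m, hm, hsep.ne, hsymm⟩
end

section
/- For n×n matrices A_1, …, A_s over [0,∞] each with zero diagonal, and any permutation π of {1,…,s}, the Kleene star of the product is invariant: (A_1 ⊙ ⋯ ⊙ A_s)* = (A_{π(1)} ⊙ ⋯ ⊙ A_{π(s)})*. -/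
open scoped ENNReal

/-- Tropical matrix power: A^{⊙0} = I, A^{⊙(s+1)} = A ⊙ A^{⊙s}. -/
noncomputable def tropPow {n : ℕ} (A : Matrix (Fin n) (Fin n) ℝ≥0∞) : ℕ → Matrix (Fin n) (Fin n) ℝ≥0∞
  | 0 => tropId
  | s + 1 => tropMul A (tropPow A s)

/-- Entrywise minimum A ⊕ B. -/
noncomputable def tropAdd {n : ℕ} (A B : Matrix (Fin n) (Fin n) ℝ≥0∞) : Matrix (Fin n) (Fin n) ℝ≥0∞ :=
  fun i j => min (A i j) (B i j)

/-- The Kleene star A* = I ⊕ A ⊕ A^{⊙2} ⊕ ⋯ . -/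
noncomputable def kleene {n : ℕ} (A : Matrix (Fin n) (Fin n) ℝ≥0∞) : Matrix (Fin n) (Fin n) ℝ≥0∞ :=
  fun i j => ⨅ s : ℕ, tropPow A s i j

/-!
Let `M` be the entrywise minimum of the factors. Since every factor has zero diagonal, the
product `P` of the factors lies below each of them, so `P ≤ M` and `P* ≤ M*`. Conversely `M*` is a
shortest-path matrix: it lies below `M`, hence below every factor, and it satisfies the triangle
inequality `M* ≤ M* ⊙ M*`, so it lies below every product of factors, in particular below `P` and
all tropical powers of `P`; thus `M* ≤ P*`. As `M` does not depend on the order of the factors,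
neither does `P*`.
-/

namespace TropicalMatrix

variable {n : ℕ}

theorem tropMul_le_tropMul {A A' B B' : Matrix (Fin n) (Fin n) ℝ≥0∞}
    (hA : ∀ i j, A i j ≤ A' i j) (hB : ∀ i j, B i j ≤ B' i j) (i j : Fin n) :
    tropMul A B i j ≤ tropMul A' B' i j :=
  Finset.inf_mono_fun fun k _ => add_le_add (hA i k) (hB k j)

theorem tropMul_le_left {A B : Matrix (Fin n) (Fin n) ℝ≥0∞} (hB : ∀ i, B i i = 0)
    (i j : Fin n) : tropMul A B i j ≤ A i j :=
  calc tropMul A B i j ≤ A i j + B j j := Finset.inf_le (Finset.mem_univ j)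
    _ = A i j := by rw [hB, add_zero]

theorem tropMul_le_right {A B : Matrix (Fin n) (Fin n) ℝ≥0∞} (hA : ∀ i, A i i = 0)
    (i j : Fin n) : tropMul A B i j ≤ B i j :=
  calc tropMul A B i j ≤ A i i + B i j := Finset.inf_le (Finset.mem_univ i)
    _ = B i j := by rw [hA, zero_add]

theorem tropMul_diag_eq_zero {A B : Matrix (Fin n) (Fin n) ℝ≥0∞}
    (hA : ∀ i, A i i = 0) (hB : ∀ i, B i i = 0) (i : Fin n) : tropMul A B i i = 0 :=
  nonpos_iff_eq_zero.mp ((tropMul_le_left hB i i).trans_eq (hA i))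

theorem foldr_tropMul_diag_eq_zero {L : List (Matrix (Fin n) (Fin n) ℝ≥0∞)}
    (hL : ∀ X ∈ L, ∀ i, X i i = 0) (i : Fin n) : L.foldr tropMul tropId i i = 0 := by
  induction L generalizing i with
  | nil => simp [tropId]
  | cons X L ih =>
    simp only [List.forall_mem_cons] at hL
    exact tropMul_diag_eq_zero hL.1 (ih hL.2) i

theorem foldr_tropMul_le_of_mem {L : List (Matrix (Fin n) (Fin n) ℝ≥0∞)}
    (hL : ∀ X ∈ L, ∀ i, X i i = 0) {X : Matrix (Fin n) (Fin n) ℝ≥0∞} (hX : X ∈ L)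
    (i j : Fin n) : L.foldr tropMul tropId i j ≤ X i j := by
  induction L with
  | nil => simp at hX
  | cons Y L ih =>
    simp only [List.forall_mem_cons] at hL
    rcases List.mem_cons.mp hX with rfl | hX
    · exact tropMul_le_left (foldr_tropMul_diag_eq_zero hL.2) i j
    · exact (tropMul_le_right hL.1 i j).trans (ih hL.2 hX)

theorem tropPow_le_tropPow {P Q : Matrix (Fin n) (Fin n) ℝ≥0∞} (h : ∀ i j, P i j ≤ Q i j)
    (t : ℕ) (i j : Fin n) : tropPow P t i j ≤ tropPow Q t i j := by
  induction t generalizing i j with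
  | zero => exact le_rfl
  | succ t ih => exact tropMul_le_tropMul h ih i j

theorem tropPow_add_le (M : Matrix (Fin n) (Fin n) ℝ≥0∞) (a b : ℕ) (i k j : Fin n) :
    tropPow M (a + b) i j ≤ tropPow M a i k + tropPow M b k j := by
  induction a generalizing i with
  | zero => by_cases h : i = k <;> simp [tropPow, tropId, h]
  | succ a ih =>
    obtain ⟨m, -, hm⟩ := Finset.exists_mem_eq_inf Finset.univ ⟨i, Finset.mem_univ i⟩
      fun m => M i m + tropPow M a m k
    calc tropPow M (a + 1 + b) i j
        = tropMul M (tropPow M (a + b)) i j := by rw [Nat.add_right_comm]; rfl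
      _ ≤ M i m + tropPow M (a + b) m j := Finset.inf_le (Finset.mem_univ m)
      _ ≤ M i m + (tropPow M a m k + tropPow M b k j) := add_le_add_right (ih m) _
      _ = tropPow M (a + 1) i k + tropPow M b k j := by
        rw [← add_assoc, ← hm]; rfl

theorem kleene_le_tropPow (M : Matrix (Fin n) (Fin n) ℝ≥0∞) (t : ℕ) (i j : Fin n) :
    kleene M i j ≤ tropPow M t i j :=
  iInf_le _ t

theorem kleene_le_self (M : Matrix (Fin n) (Fin n) ℝ≥0∞) (i j : Fin n) :
    kleene M i j ≤ M i j :=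
  (kleene_le_tropPow M 1 i j).trans (tropMul_le_left (by simp [tropPow, tropId]) i j)

theorem kleene_triangle (M : Matrix (Fin n) (Fin n) ℝ≥0∞) (i k j : Fin n) :
    kleene M i j ≤ kleene M i k + kleene M k j := by
  simp only [kleene, ENNReal.iInf_add, ENNReal.add_iInf]
  exact le_iInf₂ fun b a => (kleene_le_tropPow M (a + b) i j).trans (tropPow_add_le M a b i k j)

theorem kleene_le_tropMul {M A B : Matrix (Fin n) (Fin n) ℝ≥0∞}
    (hA : ∀ i j, kleene M i j ≤ A i j) (hB : ∀ i j, kleene M i j ≤ B i j) (i j : Fin n) :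
    kleene M i j ≤ tropMul A B i j :=
  Finset.le_inf fun k _ => (kleene_triangle M i k j).trans (add_le_add (hA i k) (hB k j))

theorem kleene_le_foldr_tropMul {M : Matrix (Fin n) (Fin n) ℝ≥0∞}
    {L : List (Matrix (Fin n) (Fin n) ℝ≥0∞)} (hL : ∀ X ∈ L, ∀ i j, kleene M i j ≤ X i j)
    (i j : Fin n) : kleene M i j ≤ L.foldr tropMul tropId i j := by
  induction L generalizing i j with
  | nil => exact kleene_le_tropPow M 0 i j
  | cons X L ih =>
    simp only [List.forall_mem_cons] at hL
    exact kleene_le_tropMul hL.1 (ih hL.2) i j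

theorem kleene_le_kleene {P Q : Matrix (Fin n) (Fin n) ℝ≥0∞} (h : ∀ i j, P i j ≤ Q i j)
    (i j : Fin n) : kleene P i j ≤ kleene Q i j :=
  iInf_mono fun t => tropPow_le_tropPow h t i j

theorem kleene_le_kleene_of_kleene_le {M P : Matrix (Fin n) (Fin n) ℝ≥0∞}
    (h : ∀ i j, kleene M i j ≤ P i j) (i j : Fin n) : kleene M i j ≤ kleene P i j := by
  refine le_iInf fun t => ?_
  induction t generalizing i j with
  | zero => exact kleene_le_tropPow M 0 i j
  | succ t ih => exact kleene_le_tropMul h ih i j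

theorem kleene_foldr_tropMul {L : List (Matrix (Fin n) (Fin n) ℝ≥0∞)}
    (hL : ∀ X ∈ L, ∀ i, X i i = 0) :
    kleene (L.foldr tropMul tropId) = kleene fun i j => ⨅ X ∈ L, X i j := by
  set M : Matrix (Fin n) (Fin n) ℝ≥0∞ := fun i j => ⨅ X ∈ L, X i j
  have hPM : ∀ i j, L.foldr tropMul tropId i j ≤ M i j := fun i j =>
    le_iInf₂ fun X hX => foldr_tropMul_le_of_mem hL hX i j
  have hMP : ∀ i j, kleene M i j ≤ L.foldr tropMul tropId i j :=
    kleene_le_foldr_tropMul fun X hX i j => (kleene_le_self M i j).trans (iInf₂_le X hX)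
  ext i j
  exact le_antisymm (kleene_le_kleene hPM i j) (kleene_le_kleene_of_kleene_le hMP i j)

end TropicalMatrix

open TropicalMatrix in
theorem kleene_perm_invariant {n s : ℕ}
    (A : Fin s → Matrix (Fin n) (Fin n) ℝ≥0∞)
    (h0 : ∀ r i, A r i i = 0) (π : Equiv.Perm (Fin s)) :
    kleene ((List.ofFn A).foldr tropMul tropId) =
      kleene ((List.ofFn (A ∘ π)).foldr tropMul tropId) := by
  have hA : ∀ X ∈ List.ofFn A, ∀ i, X i i = 0 := by
    simpa [List.mem_ofFn] using h0
  have hπ := π.ofFn_comp_perm A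
  rw [kleene_foldr_tropMul hA, kleene_foldr_tropMul fun X hX => hA X (hπ.mem_iff.mp hX)]
  simp only [hπ.mem_iff]
end

section
/- The Kleene star of any element of the lossy gossip monoid G_n is a symmetric matrix; in particular, if A is a tropical product of lossy phone call matrices, then A* = (A*)^⊤, hence A* is a metric matrix (symmetric, zero diagonal, satisfying all triangle inequalities). -/
/-!
Over the tropical semiring `Tropical ℝ≥0∞`, `prodC l` is the ordinary matrix product `C₁ ⋯ C_r`
of symmetric call matrices, each `≤ 1` entrywise because its diagonal is zero. Transposition
reverses the product, so symmetry of the star amounts to its invariance under reversing the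
factors. Inserting factors `≤ 1` only decreases a product, and `C₁ ⋯ C_r` is a subword of
`(C_r ⋯ C₁)^r`; hence `(C_r ⋯ C₁)^(r t) ≤ (C₁ ⋯ C_r)^t` for every `t`, so the star of the reversed
product is at most that of the product, and by the same argument applied to the reversed list
they are equal. Zero diagonal and triangle inequality hold for every Kleene star, since
`A^(s + t) = A^s A^t`.
-/

open scoped ENNReal

open Matrix Tropical

section TropicalMatrix

variable {ι R : Type*}

instance [PartialOrder R] {m : Type*} : PartialOrder (Matrix m ι (Tropical R)) :=
  inferInstanceAs (PartialOrder (m → ι → Tropical R))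

variable [LinearOrderedAddCommMonoidWithTop R]

theorem Matrix.map_trop_le_one [DecidableEq ι] {A : Matrix ι ι R} (h : ∀ i, A i i = 0) :
    A.map trop ≤ 1 := by
  intro i j
  rcases eq_or_ne i j with rfl | hij
  · simp [h]
  · simp [one_apply_ne hij]

variable [Fintype ι]

instance : MulLeftMono (Matrix ι ι (Tropical R)) :=
  ⟨fun C _ _ h i j => Finset.sum_le_sum fun k _ => mul_le_mul_right (h k j) (C i k)⟩

instance : MulRightMono (Matrix ι ι (Tropical R)) :=
  ⟨fun C _ _ h i j => Finset.sum_le_sum fun k _ => mul_le_mul_left (h i k) (C k j)⟩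

end TropicalMatrix

theorem List.Sublist.prod_le_prod_of_le_one {M : Type*} [Monoid M] [Preorder M] [MulLeftMono M]
    [MulRightMono M] {L₁ L₂ : List M} (h : L₁.Sublist L₂) (h₁ : ∀ a ∈ L₂, a ≤ 1) :
    L₂.prod ≤ L₁.prod :=
  h.prod_le_prod' (M := Mᵒᵈ) h₁

theorem List.sublist_flatten_replicate_length {α : Type*} {L K : List α} (h : L ⊆ K) :
    L.Sublist (replicate L.length K).flatten := by
  induction L with
  | nil => simp
  | cons a L ih =>
    rw [length_cons, replicate_succ, flatten_cons, ← singleton_append]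
    exact (singleton_sublist.2 (h mem_cons_self)).append (ih (subset_of_cons_subset h))

theorem List.prod_pow_length_le_of_subset {M : Type*} [Monoid M] [Preorder M] [MulLeftMono M]
    [MulRightMono M] {L K : List M} (hK : ∀ a ∈ K, a ≤ 1) (h : L ⊆ K) :
    K.prod ^ L.length ≤ L.prod := by
  have := (sublist_flatten_replicate_length h).prod_le_prod_of_le_one
    (by simpa using fun a _ => hK a)
  rwa [prod_flatten, map_replicate, prod_replicate] at this

section Kleene

variable {n : ℕ}

theorem map_trop_tropMul (A B : Matrix (Fin n) (Fin n) ℝ≥0∞) :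
    (tropMul A B).map trop = A.map trop * B.map trop := by
  ext i j
  apply untrop_injective
  simp [tropMul, mul_apply, Finset.untrop_sum', Function.comp_def]

theorem map_trop_tropId : (tropId : Matrix (Fin n) (Fin n) ℝ≥0∞).map trop = 1 := by
  ext i j
  by_cases h : i = j <;> simp [tropId, one_apply, h]

theorem map_trop_tropPow (A : Matrix (Fin n) (Fin n) ℝ≥0∞) (s : ℕ) :
    (tropPow A s).map trop = A.map trop ^ s := by
  induction s with
  | zero => exact map_trop_tropId
  | succ s ih => rw [tropPow, map_trop_tropMul, ih, pow_succ']

theorem map_trop_prodC (l : List (Fin n × Fin n × ℝ≥0∞)) :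
    (prodC l).map trop = (l.map fun t => (call t.1 t.2.1 t.2.2).map trop).prod := by
  induction l with
  | nil => exact map_trop_tropId
  | cons t l ih =>
    rw [List.map_cons, List.prod_cons, ← ih, ← map_trop_tropMul]
    rfl

theorem tropPow_add (A : Matrix (Fin n) (Fin n) ℝ≥0∞) (s t : ℕ) :
    tropPow A (s + t) = tropMul (tropPow A s) (tropPow A t) :=
  map_injective trop_injective <| by simp only [map_trop_tropMul, map_trop_tropPow, pow_add]

theorem kleene_apply (A : Matrix (Fin n) (Fin n) ℝ≥0∞) (i j : Fin n) :
    kleene A i j = ⨅ s : ℕ, untrop ((A.map trop ^ s) i j) := by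
  simp [kleene, ← map_trop_tropPow]

theorem kleene_apply_self (A : Matrix (Fin n) (Fin n) ℝ≥0∞) (i : Fin n) : kleene A i i = 0 :=
  nonpos_iff_eq_zero.1 <| (iInf_le _ 0).trans_eq <| by simp [tropPow, tropId]

theorem kleene_le_add (A : Matrix (Fin n) (Fin n) ℝ≥0∞) (i j k : Fin n) :
    kleene A i k ≤ kleene A i j + kleene A j k := by
  simp only [kleene, ENNReal.iInf_add, ENNReal.add_iInf]
  refine le_iInf₂ fun t s => ?_
  calc ⨅ r, tropPow A r i k ≤ tropPow A (s + t) i k := iInf_le _ _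
    _ ≤ tropPow A s i j + tropPow A t j k := by
      rw [tropPow_add]
      exact Finset.inf_le (Finset.mem_univ j)

theorem kleene_transpose (A : Matrix (Fin n) (Fin n) ℝ≥0∞) : kleene Aᵀ = (kleene A)ᵀ := by
  ext i j
  simp only [kleene_apply, transpose_apply, transpose_map, ← transpose_pow]

theorem kleene_le_of_pow_le {A B : Matrix (Fin n) (Fin n) ℝ≥0∞} {m : ℕ}
    (h : B.map trop ^ m ≤ A.map trop) (i j : Fin n) : kleene B i j ≤ kleene A i j := by
  simp only [kleene_apply]
  refine le_iInf fun t => (iInf_le _ (m * t)).trans ?_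
  rw [pow_mul]
  exact pow_le_pow_left' h t i j

end Kleene

theorem call_transpose {n : ℕ} (k l : Fin n) (a : ℝ≥0∞) : (call k l a)ᵀ = call k l a := by
  ext i j
  simp only [transpose_apply, call, eq_comm (a := j), and_comm, or_comm]

theorem prodC_transpose {n : ℕ} (l : List (Fin n × Fin n × ℝ≥0∞)) :
    (prodC l)ᵀ = prodC l.reverse := by
  apply map_injective trop_injective
  simp only [transpose_map, map_trop_prodC, transpose_list_prod, List.map_map, List.map_reverse]
  congr 2
  refine List.map_congr_left fun t _ => ?_
  simp only [Function.comp_apply, ← transpose_map, call_transpose]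

theorem kleene_prodC_reverse_le {n : ℕ} (l : List (Fin n × Fin n × ℝ≥0∞)) (i j : Fin n) :
    kleene (prodC l.reverse) i j ≤ kleene (prodC l) i j := by
  refine kleene_le_of_pow_le (m := l.length) ?_ i j
  rw [map_trop_prodC, map_trop_prodC, List.map_reverse, ← List.length_map]
  refine List.prod_pow_length_le_of_subset ?_ fun _ => List.mem_reverse.2
  simp only [List.mem_reverse, List.mem_map]
  rintro _ ⟨t, -, rfl⟩
  exact map_trop_le_one fun i => if_pos rfl

theorem kleene_prodC_reverse {n : ℕ} (l : List (Fin n × Fin n × ℝ≥0∞)) :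
    kleene (prodC l.reverse) = kleene (prodC l) := by
  ext i j
  exact le_antisymm (kleene_prodC_reverse_le l i j)
    (by simpa using kleene_prodC_reverse_le l.reverse i j)

open Matrix in
theorem kleene_of_gossip_is_metric_general {n : ℕ}
    (l : List (Fin n × Fin n × ℝ≥0∞)) :
    kleene (prodC l) = (kleene (prodC l))ᵀ ∧
    (∀ i, kleene (prodC l) i i = 0) ∧
    (∀ i j k, kleene (prodC l) i k ≤ kleene (prodC l) i j + kleene (prodC l) j k) := by
  refine ⟨?_, kleene_apply_self _, kleene_le_add _⟩
  rw [← kleene_transpose, prodC_transpose, kleene_prodC_reverse]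

open Matrix in
theorem kleene_of_gossip_is_metric {n : ℕ}
    (l : List (Fin n × Fin n × ℝ≥0∞)) (hd : ∀ t ∈ l, t.1 ≠ t.2.1) :
    kleene (prodC l) = (kleene (prodC l))ᵀ ∧
    (∀ i, kleene (prodC l) i i = 0) ∧
    (∀ i j k, kleene (prodC l) i k ≤ kleene (prodC l) i j + kleene (prodC l) j k) :=
  kleene_of_gossip_is_metric_general l
end

section
/- In any irredundant tropical product of lossy phone call matrices C_{I_1}(a_1) ⊙ ⋯ ⊙ C_{I_k}(a_k) over G_n (meaning that removing any single factor changes the product), the number of factors k is at most n²(n−1)/2. -/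
open scoped ENNReal

/-!
Fix a column `j`. The column of `C₁ ⊙ ⋯ ⊙ C_k` is obtained from `e_j` by letting `C_k` act
first and `C₁` last; each factor can only lower entries. Call an improvement of an entry
essential if its value is passed on, through later factors each using the value just set, to
the final value of some vertex `z`. A factor that makes no essential improvement in column `j`
can be erased without changing that column, so in an irredundant product every factor is
essential for some column.

An essential improvement of `v` is labelled by the pair `{v, z}`, or by `{z, j}` when it sets
the final value of `z` itself. This labelling is injective: along a chain no vertex is improved
twice, two chains ending at the same final value are nested, and two chains with crossed labels
would make the values along them a strict cycle. So each column has at most `n(n-1)/2`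
essential factors.
-/

open Relation

namespace LossyCalls

variable {ι : Type*} [DecidableEq ι]

section Relax

def partner (c : ι × ι × ℝ≥0∞) (w : ι) : ι := if w = c.1 then c.2.1 else c.1

/-- Min-plus action of the call matrix `C_{c.1 c.2.1}(c.2.2)` on a column vector. -/
def relax (c : ι × ι × ℝ≥0∞) (x : ι → ℝ≥0∞) (w : ι) : ℝ≥0∞ :=
  if w = c.1 ∨ w = c.2.1 then min (x w) (x (partner c w) + c.2.2) else x w

lemma relax_le (c : ι × ι × ℝ≥0∞) (x : ι → ℝ≥0∞) : relax c x ≤ x := fun w => by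
  unfold relax
  split_ifs
  exacts [min_le_left _ _, le_rfl]

lemma relax_mono (c : ι × ι × ℝ≥0∞) : Monotone (relax c) := fun x y h w => by
  unfold relax
  split_ifs
  exacts [min_le_min (h w) (add_le_add_left (h _) _), h w]

lemma relax_le_partner {c : ι × ι × ℝ≥0∞} {w : ι} (hw : w = c.1 ∨ w = c.2.1)
    (x : ι → ℝ≥0∞) : relax c x w ≤ x (partner c w) + c.2.2 := by
  rw [relax, if_pos hw]
  exact min_le_right _ _

lemma relax_eq_partner_of_lt {c : ι × ι × ℝ≥0∞} {x : ι → ℝ≥0∞} {w : ι}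
    (h : relax c x w < x w) :
    (w = c.1 ∨ w = c.2.1) ∧ relax c x w = x (partner c w) + c.2.2 := by
  unfold relax at h ⊢
  split_ifs at h ⊢ with hw
  · exact ⟨hw, min_eq_right ((min_lt_iff.1 h).resolve_left (lt_irrefl _)).le⟩
  · exact absurd h (lt_irrefl _)

lemma inf_call_add_eq_relax {n : ℕ} (p q : Fin n) (a : ℝ≥0∞) (x : Fin n → ℝ≥0∞)
    (i : Fin n) :
    (Finset.univ.inf fun m => call p q a i m + x m) = relax (p, q, a) x i := by
  have hdiag : call p q a i i + x i = x i := by simp [call]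
  apply le_antisymm
  · have hself : (Finset.univ.inf fun m => call p q a i m + x m) ≤ x i :=
      (Finset.inf_le (Finset.mem_univ i)).trans_eq hdiag
    unfold relax
    split_ifs with hi
    · refine le_min hself ((Finset.inf_le (Finset.mem_univ (partner (p, q, a) i))).trans ?_)
      rw [add_comm]
      gcongr
      simp only [call, partner]
      split_ifs <;> simp_all
    · exact hself
  · refine Finset.le_inf fun m _ => ?_
    by_cases him : i = m
    · subst him
      exact (relax_le _ _ _).trans_eq hdiag.symm
    by_cases hedge : (i = p ∧ m = q) ∨ (i = q ∧ m = p)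
    · have hm : partner (p, q, a) i = m := by
        simp only [partner]
        split_ifs <;> aesop
      have hi : i = p ∨ i = q := by tauto
      rw [call, if_neg him, if_pos hedge, add_comm, ← hm]
      exact relax_le_partner hi x
    · simp [call, him, hedge]

lemma prodC_apply {n : ℕ} (L : List (Fin n × Fin n × ℝ≥0∞)) (i j : Fin n) :
    prodC L i j = L.foldr relax (fun w => tropId w j) i := by
  induction L generalizing i with
  | nil => rfl
  | cons c L ih =>
    change (Finset.univ.inf fun m => call c.1 c.2.1 c.2.2 i m + prodC L m j) = _
    simp only [ih]
    exact inf_call_add_eq_relax _ _ _ _ i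

end Relax

section State

variable (l : List (ι × ι × ℝ≥0∞)) (x₀ : ι → ℝ≥0∞)

/-- The column vector `l[m] ⊙ ⋯ ⊙ l[k-1] ⊙ x₀`, so calls with smaller index act later. -/
def state (m : ℕ) : ι → ℝ≥0∞ := (l.drop m).foldr relax x₀

lemma state_of_lt {m : ℕ} (hm : m < l.length) :
    state l x₀ m = relax l[m] (state l x₀ (m + 1)) := by
  rw [state, List.drop_eq_getElem_cons hm]
  rfl

lemma state_of_length_le {m : ℕ} (hm : l.length ≤ m) : state l x₀ m = x₀ := by
  rw [state, List.drop_eq_nil_of_le hm]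
  rfl

lemma state_mono : Monotone (state l x₀) := monotone_nat_of_le_succ fun m => by
  rcases lt_or_ge m l.length with hm | hm
  · rw [state_of_lt l x₀ hm]
    exact relax_le _ _
  · rw [state_of_length_le l x₀ hm, state_of_length_le l x₀ (hm.trans m.le_succ)]

lemma state_le (m : ℕ) : state l x₀ m ≤ x₀ :=
  (state_mono l x₀ (le_max_left m l.length)).trans_eq
    (state_of_length_le l x₀ (le_max_right _ _))

def Improves (p : ℕ × ι) : Prop := state l x₀ p.1 p.2 < state l x₀ (p.1 + 1) p.2

variable {l x₀}

lemma Improves.lt_length {p : ℕ × ι} (h : Improves l x₀ p) : p.1 < l.length := by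
  by_contra! hp
  refine h.ne ?_
  rw [state_of_length_le l x₀ hp, state_of_length_le l x₀ (hp.trans p.1.le_succ)]

lemma Improves.state_eq {p : ℕ × ι} (h : Improves l x₀ p) :
    state l x₀ p.1 p.2 = state l x₀ (p.1 + 1) (partner (l[p.1]'h.lt_length) p.2)
      + (l[p.1]'h.lt_length).2.2 := by
  have h' := h
  rw [Improves, state_of_lt l x₀ h.lt_length] at h'
  rw [state_of_lt l x₀ h.lt_length]
  exact (relax_eq_partner_of_lt h').2

lemma Improves.state_lt {p : ℕ × ι} {m : ℕ} (h : Improves l x₀ p) (hm : p.1 < m) :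
    state l x₀ p.1 p.2 < state l x₀ m p.2 :=
  h.trans_le (state_mono l x₀ hm p.2)

lemma Improves.snd_ne_of_eq_zero {p : ℕ × ι} (h : Improves l x₀ p) {j : ι}
    (hj : x₀ j = 0) : p.2 ≠ j := by
  rintro rfl
  exact ENNReal.not_lt_zero (h.trans_le ((state_le l x₀ (p.1 + 1) p.2).trans_eq hj))

lemma state_eq_of_forall_not_improves {a b : ℕ} {v : ι} (hab : a ≤ b)
    (h : ∀ ρ, a ≤ ρ → ρ < b → ¬ Improves l x₀ (ρ, v)) :
    state l x₀ a v = state l x₀ b v := by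
  induction b, hab using Nat.le_induction with
  | base => rfl
  | succ k hak ih =>
    rw [ih fun ρ h₁ h₂ => h ρ h₁ (h₂.trans k.lt_succ_self)]
    exact le_antisymm (state_mono l x₀ k.le_succ v) (not_lt.1 (h k hak k.lt_succ_self))

end State

section Essential

variable (l : List (ι × ι × ℝ≥0∞)) (x₀ : ι → ℝ≥0∞)

/-- The call `p.1` improved `p.2` using the value of `q.2` set by the improvement `q`. -/
structure FedBy (p q : ℕ × ι) : Prop where
  improves_left : Improves l x₀ p
  improves_right : Improves l x₀ q
  lt : p.1 < q.1
  partner_eq : partner (l[p.1]'improves_left.lt_length) p.2 = q.2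
  not_improves : ∀ ρ, p.1 < ρ → ρ < q.1 → ¬ Improves l x₀ (ρ, q.2)

def IsLastImprovement (p : ℕ × ι) : Prop :=
  Improves l x₀ p ∧ ∀ s < p.1, ¬ Improves l x₀ (s, p.2)

def Essential (p : ℕ × ι) : Prop :=
  ∃ q, IsLastImprovement l x₀ q ∧ ReflTransGen (FedBy l x₀) q p

variable {l x₀}

lemma FedBy.state_le {p q : ℕ × ι} (h : FedBy l x₀ p q) :
    state l x₀ q.1 q.2 ≤ state l x₀ p.1 p.2 :=
  calc state l x₀ q.1 q.2 = state l x₀ (p.1 + 1) q.2 :=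
        (state_eq_of_forall_not_improves h.lt fun ρ h₁ h₂ => h.not_improves ρ h₁ h₂).symm
    _ ≤ state l x₀ (p.1 + 1) q.2 + (l[p.1]'h.improves_left.lt_length).2.2 := le_self_add
    _ = state l x₀ p.1 p.2 := by rw [h.improves_left.state_eq, h.partner_eq]

lemma fedBy_rightUnique : Relator.RightUnique (FedBy l x₀) := by
  intro p q q' h h'
  have hv : q.2 = q'.2 := h.partner_eq.symm.trans h'.partner_eq
  refine Prod.ext ?_ hv
  rcases lt_trichotomy q.1 q'.1 with hlt | heq | hgt
  · exact (h'.not_improves q.1 h.lt hlt (hv ▸ h.improves_right)).elim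
  · exact heq
  · exact (h.not_improves q'.1 h'.lt hgt (hv ▸ h'.improves_right)).elim

lemma state_le_of_reflTransGen {p q : ℕ × ι} (h : ReflTransGen (FedBy l x₀) p q) :
    state l x₀ q.1 q.2 ≤ state l x₀ p.1 p.2 := by
  induction h with
  | refl => exact le_rfl
  | tail _ hf ih => exact hf.state_le.trans ih

lemma eq_or_fst_lt_of_reflTransGen {p q : ℕ × ι} (h : ReflTransGen (FedBy l x₀) p q) :
    p = q ∨ p.1 < q.1 := by
  induction h with
  | refl => exact Or.inl rfl
  | tail _ hf ih => exact Or.inr (ih.elim (fun h => h ▸ hf.lt) fun h => h.trans hf.lt)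

lemma eq_of_reflTransGen_of_snd_eq {p q : ℕ × ι} (h : ReflTransGen (FedBy l x₀) p q)
    (hp : Improves l x₀ p) (hv : p.2 = q.2) : p = q := by
  refine (eq_or_fst_lt_of_reflTransGen h).resolve_right fun hlt => ?_
  have hle := state_le_of_reflTransGen h
  rw [← hv] at hle
  exact lt_irrefl _ ((hp.state_lt hlt).trans_le hle)

lemma IsLastImprovement.le {q : ℕ × ι} {m : ℕ} (hq : IsLastImprovement l x₀ q)
    (hm : Improves l x₀ (m, q.2)) : q.1 ≤ m :=
  not_lt.1 fun hlt => hq.2 m hlt hm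

lemma IsLastImprovement.eq {q q' : ℕ × ι} (hq : IsLastImprovement l x₀ q)
    (hq' : IsLastImprovement l x₀ q') (hv : q.2 = q'.2) : q = q' :=
  Prod.ext (le_antisymm (hq.le (hv ▸ hq'.1)) (hq'.le (hv ▸ hq.1))) hv

lemma IsLastImprovement.essential {q : ℕ × ι} (hq : IsLastImprovement l x₀ q) :
    Essential l x₀ q :=
  ⟨q, hq, .refl⟩

lemma Essential.improves {p : ℕ × ι} (hp : Essential l x₀ p) : Improves l x₀ p := by
  obtain ⟨q, hq, h⟩ := hp
  cases h with
  | refl => exact hq.1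
  | tail _ hf => exact hf.improves_right

lemma Essential.fedBy {p q : ℕ × ι} (hp : Essential l x₀ p) (h : FedBy l x₀ p q) :
    Essential l x₀ q :=
  let ⟨r, hr, hrp⟩ := hp
  ⟨r, hr, hrp.tail h⟩

end Essential

section Count

variable {l : List (ι × ι × ℝ≥0∞)} {x₀ : ι → ℝ≥0∞}

lemma not_crossed {p q p' q' : ℕ × ι} (hq : IsLastImprovement l x₀ q)
    (hq' : IsLastImprovement l x₀ q') (h : ReflTransGen (FedBy l x₀) q p)
    (h' : ReflTransGen (FedBy l x₀) q' p') (hv : p.2 = q'.2) (hv' : p'.2 = q.2)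
    (hne : p.2 ≠ q.2) : False := by
  obtain ⟨m, v⟩ := p
  obtain ⟨τ, z⟩ := q
  obtain ⟨τ', v'⟩ := q'
  obtain ⟨m', z'⟩ := p'
  dsimp only at hv hv' hne
  subst v' z'
  have hlt : τ < m := (eq_or_fst_lt_of_reflTransGen h).resolve_left fun e => hne (by cases e; rfl)
  have hlt' : τ' < m' :=
    (eq_or_fst_lt_of_reflTransGen h').resolve_left fun e => hne (by cases e; rfl)
  have hle : τ ≤ m' := hq.le (Essential.improves ⟨_, hq', h'⟩)
  have hle' : τ' ≤ m := hq'.le (Essential.improves ⟨_, hq, h⟩)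
  have c₁ : state l x₀ m v ≤ state l x₀ τ z := state_le_of_reflTransGen h
  have c₂ : state l x₀ m' z ≤ state l x₀ τ' v := state_le_of_reflTransGen h'
  -- `c₁`, `c₂` and monotonicity close a cycle of `≤`; one link is strict, as otherwise
  -- `τ' = m > τ = m' > τ'`.
  rcases (by omega : τ' < m ∨ τ < m') with hs | hs
  · have c₃ := (hq'.1.state_lt hs).trans_le c₁
    exact lt_irrefl _ (c₃.trans_le ((state_mono l x₀ hle z).trans c₂))
  · have c₃ := (hq.1.state_lt hs).trans_le c₂
    exact lt_irrefl _ (c₃.trans_le ((state_mono l x₀ hle' v).trans c₁))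

def witnessPair (j : ι) (q p : ℕ × ι) : Sym2 ι :=
  if p.2 = q.2 then s(q.2, j) else s(p.2, q.2)

lemma not_isDiag_witnessPair {j : ι} {q p : ℕ × ι} (hq : q.2 ≠ j) :
    ¬ (witnessPair j q p).IsDiag := by
  unfold witnessPair
  split_ifs with hv <;> simpa [Sym2.mk_isDiag_iff]

lemma eq_of_witnessPair_eq {j : ι} (hj : x₀ j = 0) {p q p' q' : ℕ × ι}
    (hq : IsLastImprovement l x₀ q) (hq' : IsLastImprovement l x₀ q')
    (h : ReflTransGen (FedBy l x₀) q p) (h' : ReflTransGen (FedBy l x₀) q' p')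
    (heq : witnessPair j q p = witnessPair j q' p') : p = p' := by
  have hp : Improves l x₀ p := Essential.improves ⟨q, hq, h⟩
  have hp' : Improves l x₀ p' := Essential.improves ⟨q', hq', h'⟩
  unfold witnessPair at heq
  split_ifs at heq with hv hv' hv'
  · have hz : q.2 = q'.2 :=
      (Sym2.eq_iff.1 heq).elim And.left fun e => (hq.1.snd_ne_of_eq_zero hj e.1).elim
    rw [← eq_of_reflTransGen_of_snd_eq h hq.1 hv.symm,
      ← eq_of_reflTransGen_of_snd_eq h' hq'.1 hv'.symm, hq.eq hq' hz]
  · exact (Sym2.eq_iff.1 heq).elim (fun e => (hq'.1.snd_ne_of_eq_zero hj e.2.symm).elim)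
      fun e => (hp'.snd_ne_of_eq_zero hj e.2.symm).elim
  · exact (Sym2.eq_iff.1 heq).elim (fun e => (hq.1.snd_ne_of_eq_zero hj e.2).elim)
      fun e => (hp.snd_ne_of_eq_zero hj e.1).elim
  · rcases Sym2.eq_iff.1 heq with ⟨hv₂, hz⟩ | ⟨hv₂, hz⟩
    · obtain rfl := hq.eq hq' hz
      rcases ReflTransGen.total_of_right_unique fedBy_rightUnique h h' with h'' | h''
      · exact eq_of_reflTransGen_of_snd_eq h'' hp hv₂
      · exact (eq_of_reflTransGen_of_snd_eq h'' hp' hv₂.symm).symm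
    · exact (not_crossed hq hq' h h' hv₂ hz.symm hv).elim

theorem card_le_choose_two [Fintype ι] {j : ι} (hj : x₀ j = 0) (S : Finset ℕ)
    (hS : ∀ m ∈ S, ∃ v, Essential l x₀ (m, v)) : S.card ≤ (Fintype.card ι).choose 2 := by
  simp only [Essential] at hS
  choose v q hq h using hS
  rw [← Fintype.card_coe S, ← Sym2.card_subtype_not_diag]
  refine Fintype.card_le_of_injective (fun m => ⟨witnessPair j (q m m.2) (m, v m m.2),
    not_isDiag_witnessPair ((hq m m.2).1.snd_ne_of_eq_zero hj)⟩) ?_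
  intro m m' hm
  have hp := eq_of_witnessPair_eq hj (hq m m.2) (hq m' m'.2) (h m m.2) (h m' m'.2)
    (congrArg Subtype.val hm)
  exact Subtype.ext (congrArg Prod.fst hp)

end Count

section Erase

variable {l : List (ι × ι × ℝ≥0∞)} {x₀ : ι → ℝ≥0∞} {r : ℕ}

lemma state_eraseIdx_self (hr : r < l.length) :
    state (l.eraseIdx r) x₀ r = state l x₀ (r + 1) := by
  simp [state, List.eraseIdx_eq_take_drop_succ, hr.le]

lemma state_eraseIdx_of_lt {m : ℕ} (hm : m < r) (hr : r < l.length) :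
    state (l.eraseIdx r) x₀ m =
      relax (l[m]'(hm.trans hr)) (state (l.eraseIdx r) x₀ (m + 1)) := by
  have hm' : m < (l.eraseIdx r).length := by rw [List.length_eraseIdx_of_lt hr]; omega
  rw [state_of_lt _ _ hm', List.getElem_eraseIdx_of_lt hm' hm]

lemma state_le_state_eraseIdx (hr : r < l.length) {m : ℕ} (hm : m ≤ r) :
    state l x₀ m ≤ state (l.eraseIdx r) x₀ m := by
  induction hm using Nat.decreasingInduction with
  | self =>
    rw [state_eraseIdx_self hr]
    exact state_mono l x₀ r.le_succ
  | of_succ m hm ih =>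
    rw [state_of_lt l x₀ (hm.trans hr), state_eraseIdx_of_lt hm hr]
    exact relax_mono _ ih

lemma exists_not_essential_of_state_lt (hr : r < l.length)
    (hness : ∀ v, ¬ Essential l x₀ (r, v)) {m : ℕ} (hm : m ≤ r) {w : ι}
    (hw : state l x₀ m w < state (l.eraseIdx r) x₀ m w) :
    ∃ ρ, m ≤ ρ ∧ Improves l x₀ (ρ, w) ∧ ¬ Essential l x₀ (ρ, w) ∧
      ∀ σ, m ≤ σ → σ < ρ → ¬ Improves l x₀ (σ, w) := by
  induction hm using Nat.decreasingInduction generalizing w with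
  | self =>
    rw [state_eraseIdx_self hr] at hw
    exact ⟨r, le_rfl, hw, hness w, fun σ h₁ h₂ => absurd h₂ (not_lt.2 h₁)⟩
  | of_succ m hm ih =>
    have hX := state_of_lt l x₀ (hm.trans hr)
    have hY := state_eraseIdx_of_lt (x₀ := x₀) hm hr
    by_cases hi : Improves l x₀ (m, w)
    · have hi' := hi
      rw [Improves, hX] at hi'
      obtain ⟨hend, hval⟩ := relax_eq_partner_of_lt hi'
      set c := l[m]'(hm.trans hr)
      have hu :
          state l x₀ (m + 1) (partner c w) < state (l.eraseIdx r) x₀ (m + 1) (partner c w) :=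
        lt_of_add_lt_add_right <| calc
          state l x₀ (m + 1) (partner c w) + c.2.2 = state l x₀ m w := by rw [hX, hval]
          _ < state (l.eraseIdx r) x₀ m w := hw
          _ ≤ state (l.eraseIdx r) x₀ (m + 1) (partner c w) + c.2.2 := by
            rw [hY]
            exact relax_le_partner hend _
      obtain ⟨ρ, hmρ, hρ, hρess, hfirst⟩ := ih hu
      exact ⟨m, le_rfl, hi, fun hess => hρess (hess.fedBy ⟨hi, hρ, hmρ, rfl, hfirst⟩),
        fun σ h₁ h₂ => absurd h₂ (not_lt.2 h₁)⟩
    · have hw' : state l x₀ (m + 1) w < state (l.eraseIdx r) x₀ (m + 1) w := calc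
        state l x₀ (m + 1) w = state l x₀ m w :=
          le_antisymm (not_lt.1 hi) (state_mono l x₀ m.le_succ w)
        _ < state (l.eraseIdx r) x₀ m w := hw
        _ ≤ state (l.eraseIdx r) x₀ (m + 1) w := by
          rw [hY]
          exact relax_le _ _ w
      obtain ⟨ρ, hmρ, hρ, hρess, hfirst⟩ := ih hw'
      refine ⟨ρ, by omega, hρ, hρess, fun σ h₁ h₂ => ?_⟩
      rcases h₁.eq_or_lt with rfl | h₁
      · exact hi
      · exact hfirst σ h₁ h₂

theorem foldr_eraseIdx_eq_of_forall_not_essential (hr : r < l.length)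
    (hness : ∀ v, ¬ Essential l x₀ (r, v)) :
    (l.eraseIdx r).foldr relax x₀ = l.foldr relax x₀ := by
  funext w
  refine le_antisymm (not_lt.1 fun hw => ?_) (state_le_state_eraseIdx hr r.zero_le w)
  obtain ⟨ρ, -, hρ, hρess, hfirst⟩ := exists_not_essential_of_state_lt hr hness r.zero_le hw
  exact hρess (IsLastImprovement.essential ⟨hρ, fun σ hσ => hfirst σ σ.zero_le hσ⟩)

end Erase

end LossyCalls

open LossyCalls

theorem irredundant_length_bound_general {n : ℕ}
    (l : List (Fin n × Fin n × ℝ≥0∞))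
    (hirr : ∀ r < l.length, prodC (l.eraseIdx r) ≠ prodC l) :
    2 * l.length ≤ n ^ 2 * (n - 1) := by
  classical
  let E (j : Fin n) := (Finset.range l.length).filter fun r =>
    ∃ v, Essential l (fun i => tropId i j) (r, v)
  have hcover : Finset.range l.length ⊆ Finset.univ.biUnion E := by
    intro r hr
    rw [Finset.mem_range] at hr
    by_contra hnot
    simp only [E, Finset.mem_biUnion, Finset.mem_univ, Finset.mem_filter, Finset.mem_range, hr,
      true_and, not_exists] at hnot
    refine hirr r hr (funext₂ fun i j => ?_)
    rw [prodC_apply, prodC_apply, foldr_eraseIdx_eq_of_forall_not_essential hr (hnot j)]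
  have hE (j : Fin n) : (E j).card ≤ n.choose 2 := by
    simpa using card_le_choose_two (x₀ := fun i => tropId i j) (if_pos rfl) (E j)
      fun m hm => (Finset.mem_filter.1 hm).2
  have hlen : l.length ≤ n * n.choose 2 := calc
    l.length = (Finset.range l.length).card := (Finset.card_range _).symm
    _ ≤ (Finset.univ.biUnion E).card := Finset.card_le_card hcover
    _ ≤ ∑ j, (E j).card := Finset.card_biUnion_le
    _ ≤ n * n.choose 2 := by simpa using Finset.sum_le_card_nsmul Finset.univ _ _ fun j _ => hE j
  calc 2 * l.length ≤ n * (2 * n.choose 2) := by linarith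
    _ = n ^ 2 * (n - 1) := by
      rw [Nat.choose_two_right, Nat.mul_div_cancel' (Nat.even_mul_pred_self n).two_dvd]
      ring

theorem irredundant_length_bound {n : ℕ}
    (l : List (Fin n × Fin n × ℝ≥0∞))
    (hd : ∀ t ∈ l, t.1 ≠ t.2.1) (hfin : ∀ t ∈ l, t.2.2 ≠ ⊤)
    (hirr : ∀ r < l.length, prodC (l.eraseIdx r) ≠ prodC l) :
    2 * l.length ≤ n ^ 2 * (n - 1) :=
  irredundant_length_bound_general l hirr
end

section
/- Every element of the lossy gossip monoid G_n can be written as a tropical product of at most n²(n−1)/2 lossy phone call matrices. -/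
open scoped ENNReal

/-!
Entries of a product of calls are costs of time-respecting walks: `prodC l p q` is the least total
weight of a walk from `p` to `q` along a subsequence of the calls of `l`, taken in order.
Deleting redundant calls one at a time, it suffices to bound the length of an irredundant product.
For each of its calls `j`, some entry `(p, q)` increases when `j` is deleted, so a fixed optimal
simple walk from `p` to `q` passes through call `j`, at some vertex `x ≠ q`. Charging `j` to
`(p, {x, q})` is injective: with `x` and `q` in the same roles, the simple walk would take both
calls at its only visit to `x`, so it avoids one of them; with the roles swapped, the optimality
of the two walks is contradictory.
There are `n * n.choose 2` charges.
-/

namespace Gossip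

open scoped List

variable {n : ℕ}

abbrev Call (n : ℕ) := Fin n × Fin n × ℝ≥0∞

/-- The endpoint of `t` other than `p` (junk unless `p` is an endpoint of `t`). -/
def step (p : Fin n) (t : Call n) : Fin n := if p = t.1 then t.2.1 else t.1

def endpoint (p : Fin n) (s : List (Call n)) : Fin n := s.foldl step p

def IsWalk : Fin n → List (Call n) → Prop
  | _, [] => True
  | p, t :: s => (p = t.1 ∨ p = t.2.1) ∧ IsWalk (step p t) s

def cost (s : List (Call n)) : ℝ≥0∞ := (s.map fun t => t.2.2).sum

def walks (l : List (Call n)) (p q : Fin n) : Set (List (Call n)) :=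
  {s | s <+ l ∧ IsWalk p s ∧ endpoint p s = q}

@[simp] lemma endpoint_nil (p : Fin n) : endpoint p [] = p := rfl

@[simp] lemma endpoint_cons (p : Fin n) (t : Call n) (s : List (Call n)) :
    endpoint p (t :: s) = endpoint (step p t) s := rfl

@[simp] lemma endpoint_append (p : Fin n) (s₁ s₂ : List (Call n)) :
    endpoint p (s₁ ++ s₂) = endpoint (endpoint p s₁) s₂ := List.foldl_append

@[simp] lemma isWalk_nil (p : Fin n) : IsWalk p [] := trivial

@[simp] lemma isWalk_cons {p : Fin n} {t : Call n} {s : List (Call n)} :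
    IsWalk p (t :: s) ↔ (p = t.1 ∨ p = t.2.1) ∧ IsWalk (step p t) s := Iff.rfl

@[simp] lemma isWalk_append {p : Fin n} {s₁ s₂ : List (Call n)} :
    IsWalk p (s₁ ++ s₂) ↔ IsWalk p s₁ ∧ IsWalk (endpoint p s₁) s₂ := by
  induction s₁ generalizing p with
  | nil => simp
  | cons t s ih => simp [ih, and_assoc]

@[simp] lemma cost_nil : cost ([] : List (Call n)) = 0 := rfl

@[simp] lemma cost_cons (t : Call n) (s : List (Call n)) : cost (t :: s) = t.2.2 + cost s := by
  simp [cost]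

lemma cost_le_cost {s₁ s₂ : List (Call n)} (h : s₁ <+ s₂) : cost s₁ ≤ cost s₂ :=
  (h.map _).sum_le_sum fun _ _ => zero_le

lemma step_eq_of_ne {p x : Fin n} {t : Call n} (hp : p = t.1 ∨ p = t.2.1)
    (hx : x = t.1 ∨ x = t.2.1) (hpx : p ≠ x) : step p t = x := by
  unfold step
  split_ifs with h <;> grind

lemma exists_walk_to_endpoint {p x : Fin n} {s₁ s₂ : List (Call n)} {t : Call n}
    (hs : IsWalk p (s₁ ++ t :: s₂)) (hx : x = t.1 ∨ x = t.2.1) :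
    ∃ c, c <+ s₁ ++ [t] ∧ IsWalk p c ∧ endpoint p c = x := by
  simp only [isWalk_append, isWalk_cons] at hs
  by_cases h : endpoint p s₁ = x
  · exact ⟨s₁, List.sublist_append_left _ _, hs.1, h⟩
  · exact ⟨s₁ ++ [t], List.Sublist.refl _, by simp [hs.1, hs.2.1],
      by simp [step_eq_of_ne hs.2.1 hx h]⟩

lemma walks_mono {l₁ l₂ : List (Call n)} (h : l₁ <+ l₂) (p q : Fin n) :
    walks l₁ p q ⊆ walks l₂ p q :=
  fun _ hs => ⟨hs.1.trans h, hs.2⟩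

lemma prodC_nil : prodC ([] : List (Call n)) = tropId := rfl

lemma prodC_cons (t : Call n) (l : List (Call n)) :
    prodC (t :: l) = tropMul (call t.1 t.2.1 t.2.2) (prodC l) := rfl

lemma tropMul_apply (A B : Matrix (Fin n) (Fin n) ℝ≥0∞) (i j : Fin n) :
    tropMul A B i j = Finset.univ.inf fun k => A i k + B k j := rfl

lemma tropMul_le (A B : Matrix (Fin n) (Fin n) ℝ≥0∞) (i k j : Fin n) :
    tropMul A B i j ≤ A i k + B k j :=
  Finset.inf_le (Finset.mem_univ k)

@[simp] lemma call_self (k l p : Fin n) (a : ℝ≥0∞) : call k l a p p = 0 := by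
  simp [call]

lemma call_step_le {t : Call n} {p : Fin n} (hp : p = t.1 ∨ p = t.2.1) :
    call t.1 t.2.1 t.2.2 p (step p t) ≤ t.2.2 := by
  unfold call step
  split_ifs <;> simp_all

lemma call_ne_top {t : Call n} {p k : Fin n} (hpk : p ≠ k)
    (h : call t.1 t.2.1 t.2.2 p k ≠ ⊤) :
    (p = t.1 ∨ p = t.2.1) ∧ step p t = k ∧ call t.1 t.2.1 t.2.2 p k = t.2.2 := by
  unfold call step at *
  split_ifs at * <;> grind

lemma prodC_le_cost {l s : List (Call n)} {p q : Fin n} (hs : s ∈ walks l p q) :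
    prodC l p q ≤ cost s := by
  obtain ⟨hsub, hwalk, rfl⟩ := hs
  induction hsub generalizing p with
  | slnil => simp [prodC_nil, tropId]
  | @cons s l t _ ih =>
    calc prodC (t :: l) p (endpoint p s)
        ≤ call t.1 t.2.1 t.2.2 p p + prodC l p (endpoint p s) := tropMul_le _ _ _ _ _
      _ ≤ cost s := by simpa using ih hwalk
  | @cons_cons s l t _ ih =>
    calc prodC (t :: l) p (endpoint p (t :: s))
        ≤ call t.1 t.2.1 t.2.2 p (step p t) + prodC l (step p t) (endpoint (step p t) s) :=
          tropMul_le _ _ _ _ _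
      _ ≤ t.2.2 + cost s := add_le_add (call_step_le hwalk.1) (ih hwalk.2)
      _ = cost (t :: s) := (cost_cons t s).symm

lemma exists_mem_walks_cost_eq {l : List (Call n)} {p q : Fin n} (h : prodC l p q ≠ ⊤) :
    ∃ s ∈ walks l p q, cost s = prodC l p q := by
  induction l generalizing p with
  | nil =>
    obtain rfl : p = q := by
      by_contra hpq
      simp [prodC_nil, tropId, hpq] at h
    exact ⟨[], ⟨.slnil, trivial, rfl⟩, by simp [prodC_nil, tropId]⟩
  | cons t l ih =>
    obtain ⟨k, -, hk⟩ := Finset.univ.exists_mem_eq_inf ⟨p, Finset.mem_univ p⟩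
      fun k => call t.1 t.2.1 t.2.2 p k + prodC l k q
    rw [prodC_cons, tropMul_apply, hk] at h ⊢
    obtain ⟨hcall, hl⟩ := ENNReal.add_ne_top.1 h
    obtain ⟨s, ⟨hsub, hwalk, hend⟩, hcost⟩ := ih hl
    by_cases hpk : p = k
    · subst hpk
      exact ⟨s, ⟨hsub.cons t, hwalk, hend⟩, by simp [hcost]⟩
    · obtain ⟨hp, hstep, hval⟩ := call_ne_top hpk hcall
      exact ⟨t :: s, ⟨hsub.cons_cons t, ⟨hp, hstep ▸ hwalk⟩, by simp [hstep, hend]⟩,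
        by simp [hval, hcost]⟩

lemma prodC_le_prodC_of_sublist {l₁ l₂ : List (Call n)} (h : l₁ <+ l₂) (p q : Fin n) :
    prodC l₂ p q ≤ prodC l₁ p q := by
  by_cases htop : prodC l₁ p q = ⊤
  · simp [htop]
  obtain ⟨s, hs, hcost⟩ := exists_mem_walks_cost_eq htop
  exact hcost ▸ prodC_le_cost (walks_mono h p q hs)

/-- The walk visits no vertex twice. -/
def IsSimple (p : Fin n) (s : List (Call n)) : Prop :=
  ∀ ⦃s₁ s₂⦄, s₁ <+: s → s₂ <+: s → endpoint p s₁ = endpoint p s₂ → s₁ = s₂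

lemma exists_shorter_walk {p : Fin n} {s s₁ s₂ : List (Call n)} (hs : IsWalk p s)
    (h₁ : s₁ <+: s₂) (h₂ : s₂ <+: s) (hne : s₁ ≠ s₂) (he : endpoint p s₁ = endpoint p s₂) :
    ∃ s', s' <+ s ∧ IsWalk p s' ∧ endpoint p s' = endpoint p s ∧ s'.length < s.length := by
  obtain ⟨m, rfl⟩ := h₁
  obtain ⟨r, rfl⟩ := h₂
  have hm : m ≠ [] := by simpa using hne
  simp only [endpoint_append, isWalk_append] at hs he
  refine ⟨s₁ ++ r, ?_, ?_, ?_, ?_⟩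
  · simp
  · rw [isWalk_append, he]
    exact ⟨hs.1.1, hs.2⟩
  · rw [endpoint_append, endpoint_append, endpoint_append, ← he]
  · simpa using List.length_pos_iff.2 hm

lemma exists_isSimple_of_mem_walks {l s : List (Call n)} {p q : Fin n} (hs : s ∈ walks l p q) :
    ∃ s' ∈ walks l p q, cost s' ≤ cost s ∧ IsSimple p s' := by
  induction h : s.length using Nat.strong_induction_on generalizing s with
  | _ k ih =>
  by_cases hsimple : IsSimple p s
  · exact ⟨s, hs, le_rfl, hsimple⟩
  simp only [IsSimple, not_forall] at hsimple
  obtain ⟨s₁, s₂, h₁, h₂, he, hne⟩ := hsimple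
  obtain ⟨s', hsub, hwalk, hend, hlen⟩ :
      ∃ s', s' <+ s ∧ IsWalk p s' ∧ endpoint p s' = endpoint p s ∧ s'.length < s.length := by
    rcases le_total s₁.length s₂.length with hle | hle
    · exact exists_shorter_walk hs.2.1 (List.prefix_of_prefix_length_le h₁ h₂ hle) h₂ hne he
    · exact exists_shorter_walk hs.2.1 (List.prefix_of_prefix_length_le h₂ h₁ hle) h₁
        (Ne.symm hne) he.symm
  obtain ⟨s'', hs'', hcost, hsimple⟩ :=
    ih _ (h ▸ hlen) ⟨hsub.trans hs.1, hwalk, hend.trans hs.2.2⟩ rfl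
  exact ⟨s'', hs'', hcost.trans (cost_le_cost hsub), hsimple⟩

lemma exists_isSimple_cost_eq {l : List (Call n)} {p q : Fin n} (h : prodC l p q ≠ ⊤) :
    ∃ s ∈ walks l p q, cost s = prodC l p q ∧ IsSimple p s := by
  obtain ⟨s, hs, hcost⟩ := exists_mem_walks_cost_eq h
  obtain ⟨s', hs', hle, hsimple⟩ := exists_isSimple_of_mem_walks hs
  exact ⟨s', hs', le_antisymm (hcost ▸ hle) (prodC_le_cost hs'), hsimple⟩

lemma IsSimple.eq_of_eq_append_cons {p : Fin n} {s₁ s₂ s₁' s₂' : List (Call n)} {t t' : Call n}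
    (hs : IsSimple p (s₁ ++ t :: s₂)) (h : s₁ ++ t :: s₂ = s₁' ++ t' :: s₂')
    (he : endpoint p s₁ = endpoint p s₁') : s₁ = s₁' ∧ t = t' ∧ s₂ = s₂' := by
  obtain rfl := hs (List.prefix_append _ _) (h ▸ List.prefix_append _ _) he
  simpa using h

lemma IsSimple.endpoint_ne {p : Fin n} {s₁ s₂ : List (Call n)} {t : Call n}
    (hs : IsSimple p (s₁ ++ t :: s₂)) : endpoint p s₁ ≠ endpoint p (s₁ ++ t :: s₂) :=
  fun he => by simpa using congrArg List.length (hs (List.prefix_append _ _) List.prefix_rfl he)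

lemma _root_.List.exists_eq_append_cons_of_not_sublist_eraseIdx {α : Type*} {l s : List α}
    {j : ℕ} (hj : j < l.length) (hs : s <+ l) (hsj : ¬ s <+ l.eraseIdx j) :
    ∃ s₁ s₂, s = s₁ ++ l[j] :: s₂ ∧ s₁ <+ l.take j ∧ s₂ <+ l.drop (j + 1) := by
  have hl : l = l.take j ++ l[j] :: l.drop (j + 1) := by
    rw [← List.drop_eq_getElem_cons hj, List.take_append_drop]
  rw [hl, List.sublist_append_iff] at hs
  rw [List.eraseIdx_eq_take_drop_succ] at hsj
  obtain ⟨s₁, s₂, rfl, h₁, h₂⟩ := hs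
  cases h₂ with
  | cons _ h₂ => exact absurd (h₁.append h₂) hsj
  | cons_cons _ h₂ => exact ⟨s₁, _, rfl, h₁, h₂⟩

/-- `σ` takes the `j`-th call of `l` at the vertex `x`. -/
def Crosses (l : List (Call n)) (j : Fin l.length) (p x : Fin n) (σ : List (Call n)) : Prop :=
  ∃ s₁ s₂, σ = s₁ ++ l[j] :: s₂ ∧ s₁ <+ l.take j ∧ s₂ <+ l.drop ((j : ℕ) + 1) ∧
    endpoint p s₁ = x

lemma exists_crosses {l σ : List (Call n)} (j : Fin l.length) (p : Fin n) (hσ : σ <+ l)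
    (hσj : ¬ σ <+ l.eraseIdx j) : ∃ x, Crosses l j p x σ :=
  let ⟨s₁, s₂, h, h₁, h₂⟩ := List.exists_eq_append_cons_of_not_sublist_eraseIdx j.2 hσ hσj
  ⟨_, s₁, s₂, h, h₁, h₂, rfl⟩

lemma IsSimple.ne_of_crosses {l σ : List (Call n)} {j : Fin l.length} {p x : Fin n}
    (hσ : IsSimple p σ) (hj : Crosses l j p x σ) : x ≠ endpoint p σ := by
  obtain ⟨s₁, s₂, rfl, -, -, rfl⟩ := hj
  exact hσ.endpoint_ne

lemma IsSimple.sublist_eraseIdx_of_crosses {l σ : List (Call n)} {a b : Fin l.length} (hab : a < b)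
    {p x : Fin n} (hσ : IsSimple p σ) (ha : Crosses l a p x σ) (hb : Crosses l b p x σ) :
    σ <+ l.eraseIdx a := by
  obtain ⟨s₁, s₂, rfl, hs₁, -, rfl⟩ := ha
  obtain ⟨s₁', s₂', h, -, hs₂', he⟩ := hb
  obtain ⟨-, ht, h₂⟩ := hσ.eq_of_eq_append_cons h he.symm
  rw [ht, h₂, List.eraseIdx_eq_take_drop_succ]
  refine hs₁.append ?_
  calc l[b] :: s₂' <+ l[b] :: l.drop ((b : ℕ) + 1) := hs₂'.cons_cons _
    _ = l.drop b := (List.drop_eq_getElem_cons b.2).symm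
    _ <+ l.drop ((a : ℕ) + 1) := List.drop_sublist_drop_left _ hab

/-- The prefix of `σ` before call `a` reaches `x` avoiding call `b`, so
`prodC (l.eraseIdx b) p x ≤ prodC l p u`. The prefix of `τ` before call `b` reaches `u`: either it
avoids call `a`, so `prodC (l.eraseIdx a) p u ≤ prodC l p x`, closing a cycle of strict
inequalities, or it meets `x` at call `a`, contradicting `hx`. -/
lemma false_of_crosses_swap {l σ τ : List (Call n)} {a b : Fin l.length} (hab : a < b)
    {p u x : Fin n} (hu : prodC l p u < prodC (l.eraseIdx a) p u)
    (hx : prodC l p x < prodC (l.eraseIdx b) p x)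
    (hσ : σ ∈ walks l p u) (hσcost : cost σ = prodC l p u) (hσa : Crosses l a p x σ)
    (hτ : τ ∈ walks l p x) (hτcost : cost τ = prodC l p x) (hτb : Crosses l b p u τ) : False := by
  obtain ⟨s₁, s₂, rfl, hs₁, -, hs₁x⟩ := hσa
  obtain ⟨w, w₂, rfl, -, -, hwu⟩ := hτb
  have htake : l.take ((a : ℕ) + 1) <+ l.eraseIdx b := by
    rw [List.eraseIdx_eq_take_drop_succ]
    exact (List.take_sublist_take_left hab).trans (List.sublist_append_left _ _)
  have hwalk := isWalk_append.1 hσ.2.1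
  have hxa : x = l[a].1 ∨ x = l[a].2.1 := hs₁x ▸ hwalk.2.1
  have hwcost : cost w ≤ prodC l p x := hτcost ▸ cost_le_cost (List.sublist_append_left _ _)
  have hux : prodC (l.eraseIdx b) p x ≤ prodC l p u := calc
    _ ≤ cost s₁ := prodC_le_cost
      ⟨hs₁.trans ((List.take_sublist_take_left a.1.le_succ).trans htake), hwalk.1, hs₁x⟩
    _ ≤ prodC l p u := hσcost ▸ cost_le_cost (List.sublist_append_left _ _)
  have hw : w ∈ walks l p u :=
    ⟨(List.sublist_append_left _ _).trans hτ.1, (isWalk_append.1 hτ.2.1).1, hwu⟩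
  by_cases hwa : w <+ l.eraseIdx a
  · have := prodC_le_cost ⟨hwa, hw.2⟩
    exact lt_asymm (hu.trans_le this) (hwcost.trans_lt (hx.trans_le hux))
  obtain ⟨w₁, w₁', hw_eq, hw₁, -⟩ :=
    List.exists_eq_append_cons_of_not_sublist_eraseIdx a.2 hw.1 hwa
  obtain ⟨c, hc, hcwalk, hcx⟩ := exists_walk_to_endpoint (hw_eq ▸ hw.2.1) hxa
  have hcb : c <+ l.eraseIdx b := by
    refine hc.trans (.trans ?_ htake)
    rw [List.take_succ_eq_append_getElem a.2]
    exact hw₁.append (.refl _)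
  have hcw : c <+ w := hw_eq ▸ hc.trans (by simp)
  exact (hx.trans_le ((prodC_le_cost ⟨hcb, hcwalk, hcx⟩).trans
    ((cost_le_cost hcw).trans hwcost))).false

lemma exists_optimal_walks (l : List (Call n)) :
    ∃ σ : Fin n → Fin n → List (Call n), ∀ p q, prodC l p q ≠ ⊤ →
      σ p q ∈ walks l p q ∧ cost (σ p q) = prodC l p q ∧ IsSimple p (σ p q) := by
  have h (p q : Fin n) : ∃ σ : List (Call n), prodC l p q ≠ ⊤ →
      σ ∈ walks l p q ∧ cost σ = prodC l p q ∧ IsSimple p σ := by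
    by_cases htop : prodC l p q = ⊤
    · exact ⟨[], fun h => absurd htop h⟩
    · obtain ⟨σ, hσ⟩ := exists_isSimple_cost_eq htop
      exact ⟨σ, fun _ => hσ⟩
  choose σ hσ using h
  exact ⟨σ, hσ⟩

def Irredundant (l : List (Call n)) : Prop :=
  ∀ j : Fin l.length, prodC (l.eraseIdx j) ≠ prodC l

lemma Irredundant.exists_lt {l : List (Call n)} (hl : Irredundant l) (j : Fin l.length) :
    ∃ p q, prodC l p q < prodC (l.eraseIdx j) p q := by
  by_contra! h
  exact hl j (funext₂ fun p q =>
    le_antisymm (h p q) (prodC_le_prodC_of_sublist (List.eraseIdx_sublist _ _) p q))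

theorem Irredundant.length_le {l : List (Call n)} (hl : Irredundant l) :
    l.length ≤ n * n.choose 2 := by
  classical
  obtain ⟨σ, hσ⟩ := exists_optimal_walks l
  have hcharge (j : Fin l.length) : ∃ p q x, prodC l p q < prodC (l.eraseIdx j) p q ∧
      Crosses l j p x (σ p q) := by
    obtain ⟨p, q, hlt⟩ := hl.exists_lt j
    obtain ⟨hmem, hcost, -⟩ := hσ p q hlt.ne_top
    obtain ⟨x, hx⟩ := exists_crosses j p hmem.1 fun h =>
      (hcost ▸ hlt).not_ge (prodC_le_cost ⟨h, hmem.2⟩)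
    exact ⟨p, q, x, hlt, hx⟩
  choose p q x hlt hx using hcharge
  have hxq (j : Fin l.length) : x j ≠ q j := by
    obtain ⟨⟨-, -, hend⟩, -, hsimple⟩ := hσ _ _ (hlt j).ne_top
    exact hend ▸ hsimple.ne_of_crosses (hx j)
  let charge (j : Fin l.length) : Fin n × {z : Sym2 (Fin n) // ¬ z.IsDiag} :=
    (p j, ⟨s(x j, q j), by simpa using hxq j⟩)
  have hinj : Function.Injective charge := by
    refine Function.Injective.of_lt_imp_ne fun a b hab h => ?_
    simp only [charge, Prod.mk.injEq, Subtype.mk.injEq, Sym2.eq_iff] at h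
    obtain ⟨hp, ⟨hxx, hqq⟩ | ⟨hxq_ab, hqx_ab⟩⟩ := h
    · obtain ⟨⟨-, hwalk, hend⟩, hcost, hsimple⟩ := hσ _ _ (hlt a).ne_top
      have hb := hx b
      rw [← hp, ← hqq, ← hxx] at hb
      exact (hcost ▸ hlt a).not_ge (prodC_le_cost
        ⟨hsimple.sublist_eraseIdx_of_crosses hab (hx a) hb, hwalk, hend⟩)
    · have hb := hx b
      have hltb := hlt b
      have hτ := hσ _ _ (hlt b).ne_top
      simp only [← hp, ← hqx_ab, ← hxq_ab] at hb hltb hτ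
      have hσa := hσ _ _ (hlt a).ne_top
      exact false_of_crosses_swap hab (hlt a) hltb hσa.1 hσa.2.1 (hx a) hτ.1 hτ.2.1 hb
  have := Fintype.card_le_of_injective charge hinj
  rwa [Fintype.card_prod, Sym2.card_subtype_not_diag, Fintype.card_fin, Fintype.card_fin] at this

lemma exists_irredundant_sublist (l : List (Call n)) :
    ∃ l', l' <+ l ∧ prodC l' = prodC l ∧ Irredundant l' := by
  induction h : l.length using Nat.strong_induction_on generalizing l with
  | _ k ih =>
  by_cases hl : Irredundant l
  · exact ⟨l, .refl l, rfl, hl⟩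
  obtain ⟨j, hj⟩ : ∃ j : Fin l.length, prodC (l.eraseIdx j) = prodC l := by
    simpa [Irredundant] using hl
  have hlen : (l.eraseIdx j).length < k := by
    rw [List.length_eraseIdx_of_lt j.2, ← h]
    exact Nat.sub_one_lt_of_lt j.pos
  obtain ⟨l', hl', hprod, hirr⟩ := ih _ hlen _ rfl
  exact ⟨l', hl'.trans (List.eraseIdx_sublist _ _), hprod.trans hj, hirr⟩

lemma _root_.Nat.two_mul_mul_choose_two (n : ℕ) : 2 * (n * n.choose 2) = n ^ 2 * (n - 1) := by
  rw [Nat.choose_two_right, mul_left_comm, Nat.mul_div_cancel' (Nat.even_mul_pred_self n).two_dvd]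
  ring

end Gossip

theorem length_bound {n : ℕ}
    (l : List (Fin n × Fin n × ℝ≥0∞)) (hd : ∀ t ∈ l, t.1 ≠ t.2.1) :
    ∃ l' : List (Fin n × Fin n × ℝ≥0∞),
      (∀ t ∈ l', t.1 ≠ t.2.1) ∧ prodC l' = prodC l ∧
      2 * l'.length ≤ n ^ 2 * (n - 1) := by
  obtain ⟨l', hsub, hprod, hirr⟩ := Gossip.exists_irredundant_sublist l
  refine ⟨l', fun t ht => hd t (hsub.subset ht), hprod, ?_⟩
  rw [← Nat.two_mul_mul_choose_two]
  exact Nat.mul_le_mul_left 2 hirr.length_le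
end

section
/- The set {A_1 ⊙ ⋯ ⊙ A_k : k ∈ ℕ, A_i metric matrices} of all tropical products of n×n metric matrices is the support of a finite polyhedral fan in ℝ_{≥0}^{n×n}: it is a finite union of images of orthants ℝ_{≥0}^m under piecewise-linear maps given by tropical products of lossy phone call matrices. -/
open scoped ENNReal

open scoped NNReal

/-- A metric matrix: finite entries, zero diagonal, symmetric, triangle inequalities. -/
def IsMetric {n : ℕ} (A : Matrix (Fin n) (Fin n) ℝ≥0∞) : Prop :=
  (∀ i j, A i j ≠ ⊤) ∧ (∀ i, A i i = 0) ∧ (∀ i j, A i j = A j i) ∧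
    ∀ i j k, A i k ≤ A i j + A j k

/-- The piecewise-linear map attached to a list of pairs `I`, sending a point of the
orthant ℝ_{≥0}^{|I|} to the corresponding tropical product of lossy phone call matrices. -/
noncomputable def callProdMap {n : ℕ} (I : List (Fin n × Fin n)) :
    (Fin I.length → ℝ≥0) → Matrix (Fin n) (Fin n) ℝ≥0∞ :=
  fun a => (List.ofFn fun r : Fin I.length =>
    call (I.get r).1 (I.get r).2 (a r : ℝ≥0∞)).foldr tropMul tropId

/-!
A metric matrix `M` is the tropical product of the calls `C_{ij}(M i j)` over all pairs, so a
product of metric matrices is a product of calls with finite parameters. An entry of a product of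
calls is the cost of a cheapest walk through the calls in their order; such a walk can be taken
without repeated vertices, so it uses at most `n - 1` calls, and keeping only the calls used by the
optimal walks of the `n²` entries leaves at most `(n - 1) n²` calls with the same product. Putting
in front one call per pair with a parameter `T` bounding all entries changes nothing, so every
product of metrics lies in the image of one of finitely many patterns that contain all pairs.

Conversely, if a pattern contains all pairs the product has finite entries, bounded by the total
cost `T` of the calls; replacing the entries `∞` of each call by `T` makes it a metric matrix and
changes the product only above `T`, that is, not at all.
-/

theorem List.Sublist.exists_merge {α : Type*} {u v w : List α} (hu : u.Sublist w)
    (hv : v.Sublist w) :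
    ∃ z, z.Sublist w ∧ u.Sublist z ∧ v.Sublist z ∧ z.length ≤ u.length + v.length := by
  induction hu generalizing v with
  | slnil => exact ⟨v, hv, List.nil_sublist v, .refl v, by simp⟩
  | cons a _ ih =>
    cases hv with
    | cons _ hv =>
      obtain ⟨z, hz, hu, hv, hlen⟩ := ih hv
      exact ⟨z, hz.cons a, hu, hv, hlen⟩
    | cons_cons _ hv =>
      obtain ⟨z, hz, hu, hv, hlen⟩ := ih hv
      exact ⟨a :: z, hz.cons_cons a, hu.cons a, hv.cons_cons a, by grind⟩
  | cons_cons a _ ih =>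
    cases hv with
    | cons _ hv =>
      obtain ⟨z, hz, hu, hv, hlen⟩ := ih hv
      exact ⟨a :: z, hz.cons_cons a, hu.cons_cons a, hv.cons a, by grind⟩
    | cons_cons _ hv =>
      obtain ⟨z, hz, hu, hv, hlen⟩ := ih hv
      exact ⟨a :: z, hz.cons_cons a, hu.cons_cons a, hv.cons_cons a, by grind⟩

namespace TropicalMetric

variable {n : ℕ}

section TropicalAlgebra

lemma tropMul_apply_le (A B : Matrix (Fin n) (Fin n) ℝ≥0∞) (i j k : Fin n) :
    tropMul A B i j ≤ A i k + B k j :=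
  Finset.inf_le (Finset.mem_univ k)

lemma le_tropMul_apply {A B : Matrix (Fin n) (Fin n) ℝ≥0∞} {i j : Fin n} {x : ℝ≥0∞}
    (h : ∀ k, x ≤ A i k + B k j) : x ≤ tropMul A B i j :=
  Finset.le_inf fun k _ => h k

lemma exists_tropMul_apply_eq (A B : Matrix (Fin n) (Fin n) ℝ≥0∞) (i j : Fin n) :
    ∃ k, tropMul A B i j = A i k + B k j := by
  have : Nonempty (Fin n) := ⟨i⟩
  obtain ⟨k, -, hk⟩ := Finset.exists_mem_eq_inf Finset.univ Finset.univ_nonempty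
    fun k => A i k + B k j
  exact ⟨k, hk⟩

lemma tropMul_mono {A A' B B' : Matrix (Fin n) (Fin n) ℝ≥0∞}
    (hA : ∀ i j, A i j ≤ A' i j) (hB : ∀ i j, B i j ≤ B' i j) (i j : Fin n) :
    tropMul A B i j ≤ tropMul A' B' i j :=
  le_tropMul_apply fun k => (tropMul_apply_le A B i j k).trans (add_le_add (hA i k) (hB k j))

lemma tropMul_apply_le_right {A : Matrix (Fin n) (Fin n) ℝ≥0∞} (hA : ∀ i, A i i = 0)
    (B : Matrix (Fin n) (Fin n) ℝ≥0∞) (i j : Fin n) : tropMul A B i j ≤ B i j := by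
  simpa [hA] using tropMul_apply_le A B i j i

lemma tropMul_apply_le_left (A : Matrix (Fin n) (Fin n) ℝ≥0∞)
    {B : Matrix (Fin n) (Fin n) ℝ≥0∞} (hB : ∀ i, B i i = 0) (i j : Fin n) :
    tropMul A B i j ≤ A i j := by
  simpa [hB] using tropMul_apply_le A B i j j

lemma tropMul_eq_right {D X : Matrix (Fin n) (Fin n) ℝ≥0∞} {h : ℝ≥0∞}
    (hD₀ : ∀ i, D i i = 0) (hD : ∀ i k, i ≠ k → h ≤ D i k) (hX : ∀ i j, X i j ≤ h) :
    tropMul D X = X := by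
  funext i j
  refine le_antisymm (tropMul_apply_le_right hD₀ X i j) (le_tropMul_apply fun k => ?_)
  rcases eq_or_ne i k with rfl | hik
  · simp [hD₀]
  · exact (hX i j).trans ((hD i k hik).trans le_self_add)

lemma tropId_tropMul (A : Matrix (Fin n) (Fin n) ℝ≥0∞) : tropMul tropId A = A :=
  tropMul_eq_right (h := ⊤) (by simp [tropId]) (fun i k hik => by simp [tropId, hik])
    fun _ _ => le_top

lemma tropMul_assoc (A B C : Matrix (Fin n) (Fin n) ℝ≥0∞) :
    tropMul (tropMul A B) C = tropMul A (tropMul B C) := by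
  funext i j
  simp only [tropMul, Finset.inf_eq_iInf, Finset.mem_univ, iInf_true, ENNReal.iInf_add,
    ENNReal.add_iInf, add_assoc]
  exact iInf_comm

end TropicalAlgebra

section Calls

lemma call_apply_self (k l : Fin n) (a : ℝ≥0∞) (i : Fin n) : call k l a i i = 0 := by
  simp [call]

lemma le_call_apply {k l : Fin n} (a : ℝ≥0∞) {i j : Fin n} (hij : i ≠ j) :
    a ≤ call k l a i j := by
  simp only [call, if_neg hij]; split_ifs <;> simp

lemma call_apply_le {k l : Fin n} (a : ℝ≥0∞) {i j : Fin n}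
    (h : (i = k ∧ j = l) ∨ (i = l ∧ j = k)) : call k l a i j ≤ a := by
  unfold call; split_ifs <;> simp

lemma call_apply_eq_top {k l : Fin n} (a : ℝ≥0∞) {i j : Fin n} (hij : i ≠ j)
    (h : ¬((i = k ∧ j = l) ∨ (i = l ∧ j = k))) : call k l a i j = ⊤ := by
  simp [call, hij, h]

lemma prodC_cons (t : Fin n × Fin n × ℝ≥0∞) (w : List (Fin n × Fin n × ℝ≥0∞)) :
    prodC (t :: w) = tropMul (call t.1 t.2.1 t.2.2) (prodC w) := rfl

lemma prodC_append (u v : List (Fin n × Fin n × ℝ≥0∞)) :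
    prodC (u ++ v) = tropMul (prodC u) (prodC v) := by
  induction u with
  | nil => exact (tropId_tropMul _).symm
  | cons t u ih => rw [List.cons_append, prodC_cons, prodC_cons, ih, tropMul_assoc]

lemma prodC_apply_self (w : List (Fin n × Fin n × ℝ≥0∞)) (i : Fin n) : prodC w i i = 0 := by
  induction w with
  | nil => simp [prodC, tropId]
  | cons t w ih =>
    exact le_antisymm ((tropMul_apply_le_right (call_apply_self _ _ _) _ i i).trans ih.le)
      zero_le

lemma prodC_apply_le_of_mem {w : List (Fin n × Fin n × ℝ≥0∞)} {k l : Fin n} {a : ℝ≥0∞}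
    (h : (k, l, a) ∈ w) : prodC w k l ≤ a := by
  induction w with
  | nil => simp at h
  | cons t w ih =>
    rcases List.mem_cons.mp h with rfl | h
    · exact (tropMul_apply_le_left _ (prodC_apply_self w) k l).trans
        (call_apply_le a (.inl ⟨rfl, rfl⟩))
    · exact (tropMul_apply_le_right (call_apply_self _ _ _) _ k l).trans (ih h)

lemma prodC_apply_le_of_sublist {u w : List (Fin n × Fin n × ℝ≥0∞)} (h : u.Sublist w)
    (i j : Fin n) : prodC w i j ≤ prodC u i j := by
  induction h generalizing i j with
  | slnil => exact le_rfl
  | cons t _ ih => exact (tropMul_apply_le_right (call_apply_self _ _ _) _ i j).trans (ih i j)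
  | cons_cons t _ ih => exact tropMul_mono (fun _ _ => le_rfl) ih i j

end Calls

section Walks

def Joins (t : Fin n × Fin n × ℝ≥0∞) (i k : Fin n) : Prop :=
  (i = t.1 ∧ k = t.2.1) ∨ (i = t.2.1 ∧ k = t.1)

/-- `IsWalk w p i j`: the calls of `w`, taken in order, form a walk from `i` to `j` whose
vertices after `i` are `p`. -/
inductive IsWalk : List (Fin n × Fin n × ℝ≥0∞) → List (Fin n) → Fin n → Fin n → Prop
  | nil (i : Fin n) : IsWalk [] [] i i
  | cons {t w p i k j} : Joins t i k → IsWalk w p k j → IsWalk (t :: w) (k :: p) i j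

def cost (w : List (Fin n × Fin n × ℝ≥0∞)) : ℝ≥0∞ := (w.map fun t => t.2.2).sum

@[simp] lemma cost_cons (t : Fin n × Fin n × ℝ≥0∞)
    (w : List (Fin n × Fin n × ℝ≥0∞)) :
    cost (t :: w) = t.2.2 + cost w := by
  simp [cost]

lemma cost_le_of_sublist {u w : List (Fin n × Fin n × ℝ≥0∞)} (h : u.Sublist w) :
    cost u ≤ cost w :=
  (h.map _).sum_le_sum fun _ _ => zero_le

lemma le_cost_of_mem {w : List (Fin n × Fin n × ℝ≥0∞)} {t : Fin n × Fin n × ℝ≥0∞}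
    (h : t ∈ w) : t.2.2 ≤ cost w :=
  List.le_sum_of_mem (List.mem_map_of_mem h)

lemma cost_ne_top {w : List (Fin n × Fin n × ℝ≥0∞)} (h : ∀ t ∈ w, t.2.2 ≠ ⊤) :
    cost w ≠ ⊤ :=
  List.sum_induction (· ≠ ⊤) (fun _ _ ha hb => ENNReal.add_ne_top.mpr ⟨ha, hb⟩)
    ENNReal.zero_ne_top fun _ ha => by
      obtain ⟨t, ht, rfl⟩ := List.mem_map.mp ha
      exact h t ht

variable {w : List (Fin n × Fin n × ℝ≥0∞)} {p : List (Fin n)} {i j : Fin n}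

lemma IsWalk.length_eq (h : IsWalk w p i j) : w.length = p.length := by
  induction h with
  | nil => rfl
  | cons _ _ ih => simp [ih]

lemma IsWalk.prodC_apply_le (h : IsWalk w p i j) : prodC w i j ≤ cost w := by
  induction h with
  | nil => simp [prodC_apply_self]
  | @cons t w p i k j ht _ ih =>
    calc prodC (t :: w) i j ≤ call t.1 t.2.1 t.2.2 i k + prodC w k j := tropMul_apply_le _ _ _ _ _
      _ ≤ t.2.2 + cost w := add_le_add (call_apply_le _ ht) ih
      _ = cost (t :: w) := (cost_cons t w).symm

lemma IsWalk.exists_suffix (h : IsWalk w p i j) {v : Fin n} (hv : v ∈ i :: p) :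
    ∃ u q, u.Sublist w ∧ IsWalk u q v j ∧ (v :: q).Sublist (i :: p) := by
  induction h with
  | nil i =>
    obtain rfl : v = i := List.mem_singleton.mp hv
    exact ⟨[], [], .slnil, .nil v, .refl _⟩
  | @cons t w p i k j ht hw ih =>
    by_cases hvi : v = i
    · subst hvi
      exact ⟨t :: w, k :: p, .refl _, .cons ht hw, .refl _⟩
    · obtain ⟨u, q, hu, hwalk, hq⟩ := ih ((List.mem_cons.mp hv).resolve_left hvi)
      exact ⟨u, q, hu.cons t, hwalk, hq.cons i⟩

/-- Loop erasure: if the new first vertex already occurs on the walk, keep only the part of the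
walk after that occurrence. -/
lemma IsWalk.exists_nodup_cons {t : Fin n × Fin n × ℝ≥0∞} {k : Fin n} (h : IsWalk w p k j)
    (hnd : (k :: p).Nodup) (ht : Joins t i k) :
    ∃ u q, u.Sublist (t :: w) ∧ IsWalk u q i j ∧ (i :: q).Nodup ∧
      cost u ≤ cost (t :: w) := by
  by_cases hi : i ∈ k :: p
  · obtain ⟨u, q, hu, hwalk, hq⟩ := h.exists_suffix hi
    exact ⟨u, q, hu.cons t, hwalk, hq.nodup hnd, (cost_le_of_sublist hu).trans le_add_self⟩
  · exact ⟨t :: w, k :: p, .refl _, .cons ht h, List.nodup_cons.mpr ⟨hi, hnd⟩, le_rfl⟩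

lemma exists_isWalk_nodup (w : List (Fin n × Fin n × ℝ≥0∞)) {i j : Fin n}
    (h : prodC w i j ≠ ⊤) :
    ∃ u p, u.Sublist w ∧ IsWalk u p i j ∧ (i :: p).Nodup ∧ cost u ≤ prodC w i j := by
  induction w generalizing i with
  | nil =>
    obtain rfl : i = j := by by_contra hij; simp [prodC, tropId, hij] at h
    exact ⟨[], [], .slnil, .nil i, by simp, zero_le⟩
  | cons t w ih =>
    obtain ⟨k, hk⟩ := exists_tropMul_apply_eq (call t.1 t.2.1 t.2.2) (prodC w) i j
    rw [prodC_cons, hk] at h ⊢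
    obtain ⟨hcall, hk⟩ := ENNReal.add_ne_top.mp h
    obtain ⟨u, p, hu, hwalk, hnd, hcost⟩ := ih hk
    rcases eq_or_ne i k with rfl | hik
    · exact ⟨u, p, hu.cons t, hwalk, hnd, by simpa [call_apply_self] using hcost⟩
    by_cases ht : Joins t i k
    · obtain ⟨u', p', hu', hwalk', hnd', hcost'⟩ := hwalk.exists_nodup_cons hnd ht
      refine ⟨u', p', hu'.trans (hu.cons_cons t), hwalk', hnd', ?_⟩
      calc cost u' ≤ t.2.2 + cost u := hcost'.trans (cost_cons t u).le
        _ ≤ _ := add_le_add (le_call_apply _ hik) hcost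
    · exact absurd (call_apply_eq_top _ hik ht) hcall

lemma prodC_apply_le_cost (h : prodC w i j ≠ ⊤) : prodC w i j ≤ cost w := by
  obtain ⟨u, p, hu, hwalk, -, -⟩ := exists_isWalk_nodup w h
  exact (prodC_apply_le_of_sublist hu i j).trans
    (hwalk.prodC_apply_le.trans (cost_le_of_sublist hu))

lemma exists_short_sublist_prodC_apply_le (w : List (Fin n × Fin n × ℝ≥0∞)) (i j : Fin n) :
    ∃ u, u.Sublist w ∧ u.length ≤ n - 1 ∧ prodC u i j ≤ prodC w i j := by
  by_cases h : prodC w i j = ⊤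
  · exact ⟨[], List.nil_sublist w, by simp, h ▸ le_top⟩
  obtain ⟨u, p, hu, hwalk, hnd, hcost⟩ := exists_isWalk_nodup w h
  have hcard : (i :: p).length ≤ n := by simpa using hnd.length_le_card
  refine ⟨u, hu, ?_, hwalk.prodC_apply_le.trans hcost⟩
  rw [hwalk.length_eq]
  simp only [List.length_cons] at hcard
  omega

lemma exists_short_sublist_prodC_le_on (w : List (Fin n × Fin n × ℝ≥0∞))
    (s : Finset (Fin n × Fin n)) :
    ∃ u, u.Sublist w ∧ u.length ≤ (n - 1) * s.card ∧
      ∀ e ∈ s, prodC u e.1 e.2 ≤ prodC w e.1 e.2 := by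
  classical
  induction s using Finset.induction_on with
  | empty => exact ⟨[], List.nil_sublist w, by simp, by simp⟩
  | insert e s he ih =>
    obtain ⟨u₁, hu₁, hlen₁, hle₁⟩ := ih
    obtain ⟨u₂, hu₂, hlen₂, hle₂⟩ := exists_short_sublist_prodC_apply_le w e.1 e.2
    obtain ⟨z, hz, h₁, h₂, hlen⟩ := hu₁.exists_merge hu₂
    refine ⟨z, hz, ?_, ?_⟩
    · rw [Finset.card_insert_of_notMem he, mul_add_one]
      omega
    · intro e' he'
      rcases Finset.mem_insert.mp he' with rfl | he'
      · exact (prodC_apply_le_of_sublist h₂ _ _).trans hle₂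
      · exact (prodC_apply_le_of_sublist h₁ _ _).trans (hle₁ e' he')

lemma exists_short_sublist_prodC_eq (w : List (Fin n × Fin n × ℝ≥0∞)) :
    ∃ u, u.Sublist w ∧ u.length ≤ (n - 1) * (n * n) ∧ prodC u = prodC w := by
  obtain ⟨u, hu, hlen, hle⟩ := exists_short_sublist_prodC_le_on w Finset.univ
  refine ⟨u, hu, by simpa using hlen, funext fun i => funext fun j => ?_⟩
  exact le_antisymm (hle (i, j) (Finset.mem_univ _)) (prodC_apply_le_of_sublist hu i j)

end Walks

section Metrics

lemma _root_.IsMetric.le_tropMul {M A B : Matrix (Fin n) (Fin n) ℝ≥0∞} (hM : IsMetric M)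
    (hA : ∀ i j, M i j ≤ A i j) (hB : ∀ i j, M i j ≤ B i j) (i j : Fin n) :
    M i j ≤ tropMul A B i j :=
  le_tropMul_apply fun k => (hM.2.2.2 i k j).trans (add_le_add (hA i k) (hB k j))

lemma _root_.IsMetric.le_call {M : Matrix (Fin n) (Fin n) ℝ≥0∞} (hM : IsMetric M)
    {t : Fin n × Fin n × ℝ≥0∞} (ht : M t.1 t.2.1 ≤ t.2.2) (i j : Fin n) :
    M i j ≤ call t.1 t.2.1 t.2.2 i j := by
  unfold call
  split_ifs with hij hJ
  · simp [hij, hM.2.1]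
  · rcases hJ with ⟨rfl, rfl⟩ | ⟨rfl, rfl⟩
    · exact ht
    · rwa [hM.2.2.1]
  · exact le_top

lemma _root_.IsMetric.le_prodC {M : Matrix (Fin n) (Fin n) ℝ≥0∞} (hM : IsMetric M)
    {w : List (Fin n × Fin n × ℝ≥0∞)} (hw : ∀ t ∈ w, M t.1 t.2.1 ≤ t.2.2)
    (i j : Fin n) :
    M i j ≤ prodC w i j := by
  induction w generalizing i j with
  | nil => by_cases hij : i = j <;> simp [prodC, tropId, hij, hM.2.1]
  | cons t w ih =>
    exact hM.le_tropMul (hM.le_call (hw t List.mem_cons_self))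
      (ih fun s hs => hw s (List.mem_cons_of_mem t hs)) i j

noncomputable def allPairs (n : ℕ) : List (Fin n × Fin n) := Finset.univ.toList

lemma mem_allPairs (e : Fin n × Fin n) : e ∈ allPairs n :=
  Finset.mem_toList.mpr (Finset.mem_univ e)

noncomputable def metricWord (M : Matrix (Fin n) (Fin n) ℝ≥0∞) :
    List (Fin n × Fin n × ℝ≥0∞) :=
  (allPairs n).map fun e => (e.1, e.2, M e.1 e.2)

lemma mem_metricWord (M : Matrix (Fin n) (Fin n) ℝ≥0∞) (i j : Fin n) :
    (i, j, M i j) ∈ metricWord M :=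
  List.mem_map.mpr ⟨(i, j), mem_allPairs _, rfl⟩

lemma _root_.IsMetric.metricWord_ne_top {M : Matrix (Fin n) (Fin n) ℝ≥0∞} (hM : IsMetric M) :
    ∀ t ∈ metricWord M, t.2.2 ≠ ⊤ := by
  simp only [metricWord, List.mem_map]
  rintro _ ⟨e, -, rfl⟩
  exact hM.1 e.1 e.2

lemma _root_.IsMetric.prodC_metricWord {M : Matrix (Fin n) (Fin n) ℝ≥0∞} (hM : IsMetric M) :
    prodC (metricWord M) = M := by
  funext i j
  refine le_antisymm (prodC_apply_le_of_mem (mem_metricWord M i j)) (hM.le_prodC ?_ i j)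
  simp only [metricWord, List.mem_map]
  rintro _ ⟨e, -, rfl⟩
  exact le_rfl

lemma foldr_eq_prodC_flatMap {L : List (Matrix (Fin n) (Fin n) ℝ≥0∞)}
    (hL : ∀ M ∈ L, IsMetric M) :
    L.foldr tropMul tropId = prodC (L.flatMap metricWord) := by
  induction L with
  | nil => rfl
  | cons M L ih =>
    rw [List.flatMap_cons, prodC_append, List.foldr_cons,
      (hL M List.mem_cons_self).prodC_metricWord,
      ih fun N hN => hL N (List.mem_cons_of_mem M hN)]

def constMetric (T : ℝ≥0∞) : Matrix (Fin n) (Fin n) ℝ≥0∞ :=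
  fun i j => if i = j then 0 else T

lemma isMetric_constMetric {T : ℝ≥0∞} (hT : T ≠ ⊤) :
    IsMetric (constMetric T : Matrix (Fin n) (Fin n) ℝ≥0∞) := by
  refine ⟨fun i j => ?_, fun i => by simp [constMetric], fun i j => ?_, fun i j k => ?_⟩ <;>
    unfold constMetric <;> split_ifs <;> simp_all [eq_comm]

lemma constMetric_tropMul {T : ℝ≥0∞} {X : Matrix (Fin n) (Fin n) ℝ≥0∞}
    (hX : ∀ i j, X i j ≤ T) :
    tropMul (constMetric T) X = X :=
  tropMul_eq_right (by simp [constMetric]) (fun i k hik => by simp [constMetric, hik]) hX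

/-- `call k l a` with `T` in place of `∞`. -/
def padMetric (k l : Fin n) (a T : ℝ≥0∞) : Matrix (Fin n) (Fin n) ℝ≥0∞ :=
  fun i j => if i = j then 0 else if (i = k ∧ j = l) ∨ (i = l ∧ j = k) then a else T

lemma isMetric_padMetric {k l : Fin n} {a T : ℝ≥0∞} (ha : a ≠ ⊤) (hT : T ≠ ⊤)
    (haT : a ≤ T) :
    IsMetric (padMetric k l a T) := by
  refine ⟨fun i j => ?_, fun i => by simp [padMetric], fun i j => ?_, fun i j m => ?_⟩
  all_goals unfold padMetric; split_ifs <;> simp_all [eq_comm]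
  -- of two consecutive steps between three distinct points, at most one is `{k, l}`
  all_goals first | exact haT.trans le_self_add | exfalso; grind

end Metrics

section Completion

lemma padMetric_apply_eq_or (k l : Fin n) (a T : ℝ≥0∞) (i j : Fin n) :
    padMetric k l a T i j = T ∨ padMetric k l a T i j = call k l a i j := by
  unfold padMetric call
  split_ifs <;> simp

lemma padMetric_apply_le_call (k l : Fin n) (a T : ℝ≥0∞) (i j : Fin n) :
    padMetric k l a T i j ≤ call k l a i j := by
  unfold padMetric call
  split_ifs <;> simp

noncomputable def padProd (w : List (Fin n × Fin n × ℝ≥0∞)) (T : ℝ≥0∞) :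
    Matrix (Fin n) (Fin n) ℝ≥0∞ :=
  (w.map fun t => padMetric t.1 t.2.1 t.2.2 T).foldr tropMul tropId

lemma padProd_apply_le_prodC (w : List (Fin n × Fin n × ℝ≥0∞)) (T : ℝ≥0∞)
    (i j : Fin n) :
    padProd w T i j ≤ prodC w i j := by
  induction w generalizing i j with
  | nil => exact le_rfl
  | cons t w ih => exact tropMul_mono (padMetric_apply_le_call _ _ _ _) ih i j

lemma min_prodC_apply_le_padProd (w : List (Fin n × Fin n × ℝ≥0∞)) (T : ℝ≥0∞)
    (i j : Fin n) :
    min (prodC w i j) T ≤ padProd w T i j := by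
  induction w generalizing i j with
  | nil => exact min_le_left _ _
  | cons t w ih =>
    refine le_tropMul_apply fun k => ?_
    rcases padMetric_apply_eq_or t.1 t.2.1 t.2.2 T i k with h | h <;> rw [h]
    · exact (min_le_right _ _).trans le_self_add
    · set c := call t.1 t.2.1 t.2.2 i k
      calc min (prodC (t :: w) i j) T ≤ min (c + prodC w k j) (c + T) :=
            min_le_min (tropMul_apply_le _ _ _ _ _) le_add_self
        _ = c + min (prodC w k j) T := min_add_add_left _ _ _
        _ ≤ c + padProd w T k j := by gcongr; exact ih k j

lemma padProd_eq_prodC {w : List (Fin n × Fin n × ℝ≥0∞)} {T : ℝ≥0∞}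
    (h : ∀ i j, prodC w i j ≤ T) : padProd w T = prodC w := by
  funext i j
  refine le_antisymm (padProd_apply_le_prodC w T i j) ?_
  simpa [min_eq_left (h i j)] using min_prodC_apply_le_padProd w T i j

lemma exists_metrics_foldr_eq_prodC {w : List (Fin n × Fin n × ℝ≥0∞)}
    (hw : ∀ t ∈ w, t.2.2 ≠ ⊤) (hfin : ∀ i j, prodC w i j ≠ ⊤) :
    ∃ L : List (Matrix (Fin n) (Fin n) ℝ≥0∞),
      L ≠ [] ∧ (∀ M ∈ L, IsMetric M) ∧ prodC w = L.foldr tropMul tropId := by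
  have hT : cost w ≠ ⊤ := cost_ne_top hw
  have hle : ∀ i j, prodC w i j ≤ cost w := fun i j => prodC_apply_le_cost (hfin i j)
  refine ⟨constMetric (cost w) :: w.map fun t => padMetric t.1 t.2.1 t.2.2 (cost w),
    List.cons_ne_nil _ _, ?_, ?_⟩
  · simp only [List.mem_cons, List.mem_map]
    rintro M (rfl | ⟨t, ht, rfl⟩)
    · exact isMetric_constMetric hT
    · exact isMetric_padMetric (hw t ht) hT (le_cost_of_mem ht)
  · rw [List.foldr_cons, ← padProd, padProd_eq_prodC hle, constMetric_tropMul hle]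

end Completion

section Patterns

def pattern (w : List (Fin n × Fin n × ℝ≥0∞)) : List (Fin n × Fin n) :=
  w.map fun t => (t.1, t.2.1)

lemma mem_range_callProdMap {I : List (Fin n × Fin n)} {A : Matrix (Fin n) (Fin n) ℝ≥0∞} :
    A ∈ Set.range (callProdMap I) ↔
      ∃ w, pattern w = I ∧ (∀ t ∈ w, t.2.2 ≠ ⊤) ∧ prodC w = A := by
  constructor
  · rintro ⟨a, rfl⟩
    refine ⟨List.ofFn fun r => ((I.get r).1, (I.get r).2, (a r : ℝ≥0∞)), ?_, ?_, ?_⟩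
    · simp [pattern, List.map_ofFn, Function.comp_def]
    · simp [List.mem_ofFn]
    · simp [prodC, callProdMap, List.map_ofFn, Function.comp_def]
  · rintro ⟨w, rfl, hw, rfl⟩
    refine ⟨fun r => (w[r.1]'(by simpa [pattern] using r.2)).2.2.toNNReal, ?_⟩
    unfold callProdMap prodC
    congr 1
    refine List.ext_get (by simp [pattern]) fun m h₁ h₂ => ?_
    simp [pattern, ENNReal.coe_toNNReal (hw _ (List.getElem_mem _))]

lemma prodC_apply_ne_top_of_mem_pattern {w : List (Fin n × Fin n × ℝ≥0∞)}
    (hw : ∀ t ∈ w, t.2.2 ≠ ⊤) {i j : Fin n} (h : (i, j) ∈ pattern w) :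
    prodC w i j ≠ ⊤ := by
  obtain ⟨⟨k, l, a⟩, ht, hkl⟩ := List.mem_map.mp h
  cases hkl
  exact ne_top_of_le_ne_top (hw _ ht) (prodC_apply_le_of_mem ht)

lemma exists_short_word_eq_foldr {L : List (Matrix (Fin n) (Fin n) ℝ≥0∞)} (hL : L ≠ [])
    (hmet : ∀ M ∈ L, IsMetric M) :
    ∃ v : List (Fin n × Fin n), v.length ≤ (n - 1) * (n * n) ∧
      ∃ w, pattern w = allPairs n ++ v ∧
      (∀ t ∈ w, t.2.2 ≠ ⊤) ∧ prodC w = L.foldr tropMul tropId := by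
  set w := L.flatMap metricWord
  have hw : ∀ t ∈ w, t.2.2 ≠ ⊤ := by
    simp only [w, List.mem_flatMap]
    rintro t ⟨M, hM, ht⟩
    exact (hmet M hM).metricWord_ne_top t ht
  obtain ⟨M, hM⟩ := List.exists_mem_of_ne_nil L hL
  have hfin : ∀ i j, prodC w i j ≠ ⊤ := fun i j => ne_top_of_le_ne_top ((hmet M hM).1 i j)
    (prodC_apply_le_of_mem (List.mem_flatMap.mpr ⟨M, hM, mem_metricWord M i j⟩))
  obtain ⟨u, hu, hlen, hprod⟩ := exists_short_sublist_prodC_eq w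
  have hu' : ∀ t ∈ u, t.2.2 ≠ ⊤ := fun t ht => hw t (hu.subset ht)
  have hS := isMetric_constMetric (n := n) (cost_ne_top hu')
  refine ⟨pattern u, by simpa [pattern] using hlen, metricWord (constMetric (cost u)) ++ u,
    ?_, ?_, ?_⟩
  · simp [pattern, metricWord, Function.comp_def]
  · exact List.forall_mem_append.mpr ⟨hS.metricWord_ne_top, hu'⟩
  · rw [foldr_eq_prodC_flatMap hmet, prodC_append, hS.prodC_metricWord,
      constMetric_tropMul fun i j => prodC_apply_le_cost (hprod ▸ hfin i j), hprod]

end Patterns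

end TropicalMetric

theorem products_of_metrics_fan (n : ℕ) :
    ∃ F : Finset (List (Fin n × Fin n)),
      {A : Matrix (Fin n) (Fin n) ℝ≥0∞ |
        ∃ L : List (Matrix (Fin n) (Fin n) ℝ≥0∞),
          L ≠ [] ∧ (∀ M ∈ L, IsMetric M) ∧ A = L.foldr tropMul tropId} =
      ⋃ I ∈ F, Set.range (callProdMap I) := by
  refine ⟨(List.finite_length_le _ ((n - 1) * (n * n))).toFinset.image
    (TropicalMetric.allPairs n ++ ·), Set.ext fun A => ?_⟩
  simp only [Set.mem_ofPred_eq, Set.mem_iUnion, Finset.mem_image, Set.Finite.mem_toFinset,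
    exists_prop, TropicalMetric.mem_range_callProdMap]
  constructor
  · rintro ⟨L, hL, hmet, rfl⟩
    obtain ⟨v, hv, w, hw⟩ := TropicalMetric.exists_short_word_eq_foldr hL hmet
    exact ⟨_, ⟨v, hv, rfl⟩, w, hw⟩
  · rintro ⟨_, ⟨v, -, rfl⟩, w, hpat, hw, rfl⟩
    exact TropicalMetric.exists_metrics_foldr_eq_prodC hw fun i j =>
      TropicalMetric.prodC_apply_ne_top_of_mem_pattern hw
        (hpat ▸ List.mem_append_left _ (TropicalMetric.mem_allPairs _))
end

section
/- Let A be a tropical product C_{I_1}(a_1) ⊙ ⋯ ⊙ C_{I_k}(a_k) of lossy phone call matrices. Then the (h,i)-entry of A, when finite, equals the minimum over all subsequences k_1 < ⋯ < k_s such that (I_{k_1}, …, I_{k_s}) forms a walk from h to i in the complete graph on [n], of the sum a_{k_1} + ⋯ + a_{k_s}; moreover a minimizing walk can be taken to visit no vertex twice, so s ≤ n−1. -/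
open scoped ENNReal

/-- The values of walks from `h` to `i` using a strictly increasing subsequence of the
factors of `l` as edges. -/
def walkValues {n : ℕ} (l : List (Fin n × Fin n × ℝ≥0∞)) (h i : Fin n) : Set ℝ≥0∞ :=
  {c | ∃ (s : ℕ) (k : Fin s → Fin l.length) (v : Fin (s + 1) → Fin n),
    StrictMono k ∧ v 0 = h ∧ v (Fin.last s) = i ∧
    (∀ r : Fin s,
      ((l.get (k r)).1 = v r.castSucc ∧ (l.get (k r)).2.1 = v r.succ) ∨
      ((l.get (k r)).1 = v r.succ ∧ (l.get (k r)).2.1 = v r.castSucc)) ∧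
    c = ∑ r : Fin s, (l.get (k r)).2.2}

/-!
Expanding the product one factor at a time, `prodC (t :: l) h i = min_m (C_t h m + prodC l m i)`,
where `C_t h m` is `0` for `m = h`, the weight of `t` if `t` joins `h` and `m`, and `∞` otherwise.
Following a minimising `m` at every factor produces a walk that attains the entry. Conversely,
since every call matrix has zero diagonal, deleting factors can only increase entries, so the
entry is at most the corresponding entry of the product of the walk's own edges, which is at most
the walk's weight. When the walk built this way would revisit its starting vertex, the suffix
from that revisit is no more expensive, which keeps the walk free of repeated vertices.
-/

variable {n : ℕ}

def Joins (t : Fin n × Fin n × ℝ≥0∞) (x y : Fin n) : Prop :=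
  (t.1 = x ∧ t.2.1 = y) ∨ (t.1 = y ∧ t.2.1 = x)

def IsCallWalk (l : List (Fin n × Fin n × ℝ≥0∞)) (h i : Fin n) {s : ℕ}
    (k : Fin s → Fin l.length) (v : Fin (s + 1) → Fin n) : Prop :=
  StrictMono k ∧ v 0 = h ∧ v (Fin.last s) = i ∧
    ∀ r, Joins (l.get (k r)) (v r.castSucc) (v r.succ)

noncomputable def walkWeight (l : List (Fin n × Fin n × ℝ≥0∞)) {s : ℕ}
    (k : Fin s → Fin l.length) : ℝ≥0∞ :=
  ∑ r, (l.get (k r)).2.2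

theorem call_self (a b : Fin n) (c : ℝ≥0∞) (x : Fin n) : call a b c x x = 0 :=
  if_pos rfl

section Call

variable {t : Fin n × Fin n × ℝ≥0∞} {x y : Fin n}

theorem call_le_of_joins (hxy : Joins t x y) : call t.1 t.2.1 t.2.2 x y ≤ t.2.2 := by
  unfold call
  split_ifs with hx hc
  · exact zero_le
  · exact le_rfl
  · exact absurd (by unfold Joins at hxy; tauto) hc

theorem eq_or_joins_of_call_ne_top (hne : call t.1 t.2.1 t.2.2 x y ≠ ⊤) :
    x = y ∨ Joins t x y ∧ call t.1 t.2.1 t.2.2 x y = t.2.2 := by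
  unfold call at hne ⊢
  split_ifs at hne ⊢ with hx hc
  · exact Or.inl hx
  · exact Or.inr ⟨by unfold Joins; tauto, rfl⟩
  · exact absurd rfl hne

end Call

section Product

variable (t : Fin n × Fin n × ℝ≥0∞) (l : List (Fin n × Fin n × ℝ≥0∞))

theorem prodC_cons_apply (x z : Fin n) :
    prodC (t :: l) x z = Finset.univ.inf fun y => call t.1 t.2.1 t.2.2 x y + prodC l y z :=
  rfl

theorem prodC_self (x : Fin n) : prodC l x x = 0 := by
  induction l with
  | nil => exact if_pos rfl
  | cons t l ih =>
    refine le_antisymm ?_ zero_le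
    calc prodC (t :: l) x x ≤ call t.1 t.2.1 t.2.2 x x + prodC l x x :=
          Finset.inf_le (Finset.mem_univ x)
      _ = 0 := by rw [call_self, ih, add_zero]

theorem prodC_cons_le (x z : Fin n) : prodC (t :: l) x z ≤ prodC l x z :=
  calc prodC (t :: l) x z ≤ call t.1 t.2.1 t.2.2 x x + prodC l x z :=
        Finset.inf_le (Finset.mem_univ x)
    _ = prodC l x z := by rw [call_self, zero_add]

theorem prodC_cons_le_of_joins {x y : Fin n} (hxy : Joins t x y) (z : Fin n) :
    prodC (t :: l) x z ≤ t.2.2 + prodC l y z :=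
  calc prodC (t :: l) x z ≤ call t.1 t.2.1 t.2.2 x y + prodC l y z :=
        Finset.inf_le (Finset.mem_univ y)
    _ ≤ t.2.2 + prodC l y z := by gcongr; exact call_le_of_joins hxy

end Product

theorem prodC_anti_of_sublist {l₁ l₂ : List (Fin n × Fin n × ℝ≥0∞)} (hl : List.Sublist l₁ l₂)
    (x z : Fin n) :
    prodC l₂ x z ≤ prodC l₁ x z := by
  induction hl generalizing x with
  | slnil => exact le_rfl
  | cons t _ ih => exact (prodC_cons_le t _ x z).trans (ih x)
  | cons_cons t _ ih =>
    simp only [prodC_cons_apply]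
    exact Finset.inf_mono_fun fun y _ => by gcongr; exact ih y

theorem prodC_ofFn_le_sum {s : ℕ} (e : Fin s → Fin n × Fin n × ℝ≥0∞)
    (v : Fin (s + 1) → Fin n)
    (he : ∀ r, Joins (e r) (v r.castSucc) (v r.succ)) :
    prodC (List.ofFn e) (v 0) (v (Fin.last s)) ≤ ∑ r, (e r).2.2 := by
  induction s with
  | zero => exact (prodC_self _ (v 0)).trans_le zero_le
  | succ s ih =>
    have htail := ih (Fin.tail e) (Fin.tail v) fun r => he r.succ
    rw [List.ofFn_succ, Fin.sum_univ_succ]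
    calc prodC (e 0 :: List.ofFn fun r => e r.succ) (v 0) (v (Fin.last (s + 1)))
        ≤ (e 0).2.2 + prodC (List.ofFn fun r => e r.succ) (v 1) (v (Fin.last (s + 1))) :=
          prodC_cons_le_of_joins _ _ (he 0) _
      _ ≤ (e 0).2.2 + ∑ r : Fin s, (e r.succ).2.2 := by gcongr; exact htail

theorem List.ofFn_get_comp_sublist {α : Type*} (l : List α) {s : ℕ} {k : Fin s → Fin l.length}
    (hk : StrictMono k) : (List.ofFn (l.get ∘ k)).Sublist l := by
  rw [List.sublist_iff_exists_fin_orderEmbedding_get_eq]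
  refine ⟨(Fin.castOrderIso (List.length_ofFn)).toOrderEmbedding.trans
    (OrderEmbedding.ofStrictMono k hk), fun r => ?_⟩
  simp only [List.get_ofFn]
  rfl

namespace IsCallWalk

variable {l : List (Fin n × Fin n × ℝ≥0∞)} {h i : Fin n} {s : ℕ}

theorem prodC_le_walkWeight {k : Fin s → Fin l.length} {v : Fin (s + 1) → Fin n}
    (hw : IsCallWalk l h i k v) : prodC l h i ≤ walkWeight l k := by
  obtain ⟨hk, rfl, rfl, hj⟩ := hw
  exact (prodC_anti_of_sublist (List.ofFn_get_comp_sublist l hk) _ _).trans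
    (prodC_ofFn_le_sum _ v hj)

theorem succ {k : Fin s → Fin l.length} {v : Fin (s + 1) → Fin n}
    (hw : IsCallWalk l h i k v) (t : Fin n × Fin n × ℝ≥0∞) :
    IsCallWalk (t :: l) h i (Fin.succ ∘ k) v :=
  ⟨Fin.strictMono_succ.comp hw.1, hw.2.1, hw.2.2.1, hw.2.2.2⟩

theorem cons {k : Fin s → Fin l.length} {v : Fin (s + 1) → Fin n}
    {t : Fin n × Fin n × ℝ≥0∞} {m : Fin n} (ht : Joins t h m) (hw : IsCallWalk l m i k v) :
    IsCallWalk (t :: l) h i (Fin.cons 0 (Fin.succ ∘ k) : Fin (s + 1) → Fin (l.length + 1))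
      (Fin.cons h v) := by
  obtain ⟨hk, rfl, rfl, hj⟩ := hw
  refine ⟨Fin.strictMono_cons.2 ⟨fun r => Fin.succ_pos _, Fin.strictMono_succ.comp hk⟩,
    rfl, rfl, fun r => ?_⟩
  cases r using Fin.cases with
  | zero => exact ht
  | succ r => simpa [← Fin.succ_castSucc] using hj r

theorem tail {k : Fin (s + 1) → Fin l.length} {v : Fin (s + 2) → Fin n}
    (hw : IsCallWalk l h i k v) : IsCallWalk l (v 1) i (Fin.tail k) (Fin.tail v) :=
  ⟨hw.1.comp Fin.strictMono_succ, rfl, hw.2.2.1, fun r => by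
    simpa [Fin.tail, ← Fin.succ_castSucc] using hw.2.2.2 r.succ⟩

theorem exists_injective_suffix {k : Fin s → Fin l.length} {v : Fin (s + 1) → Fin n}
    (hw : IsCallWalk l h i k v) (hv : Function.Injective v) (j : Fin (s + 1)) :
    ∃ (s' : ℕ) (k' : Fin s' → Fin l.length) (v' : Fin (s' + 1) → Fin n),
      IsCallWalk l (v j) i k' v' ∧ Function.Injective v' ∧
        walkWeight l k' ≤ walkWeight l k := by
  induction s generalizing h with
  | zero =>
    obtain rfl := Fin.fin_one_eq_zero j
    exact ⟨0, k, v, by rwa [hw.2.1], hv, le_rfl⟩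
  | succ s ih =>
    cases j using Fin.cases with
    | zero => exact ⟨_, k, v, by rwa [hw.2.1], hv, le_rfl⟩
    | succ j =>
      obtain ⟨s', k', v', hw', hv', hle⟩ := ih hw.tail (hv.comp (Fin.succ_injective _)) j
      refine ⟨s', k', v', hw', hv', hle.trans ?_⟩
      simp only [walkWeight, Fin.sum_univ_succ]
      exact le_add_self

end IsCallWalk

theorem walkWeight_cons_zero_succ (t : Fin n × Fin n × ℝ≥0∞)
    (l : List (Fin n × Fin n × ℝ≥0∞))
    {s : ℕ} (k : Fin s → Fin l.length) :
    walkWeight (t :: l) (Fin.cons 0 (Fin.succ ∘ k) : Fin (s + 1) → Fin (l.length + 1)) =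
      t.2.2 + walkWeight l k := by
  simp [walkWeight, Fin.sum_univ_succ]

theorem exists_injective_isCallWalk_of_prodC_ne_top (l : List (Fin n × Fin n × ℝ≥0∞))
    (h i : Fin n) (hfin : prodC l h i ≠ ⊤) :
    ∃ (s : ℕ) (k : Fin s → Fin l.length) (v : Fin (s + 1) → Fin n),
      IsCallWalk l h i k v ∧ Function.Injective v ∧ prodC l h i = walkWeight l k := by
  induction l generalizing h with
  | nil =>
    obtain rfl : h = i := by_contra fun hne => hfin (if_neg hne)
    exact ⟨0, Fin.elim0, fun _ => h, ⟨fun a => a.elim0, rfl, rfl, fun r => r.elim0⟩,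
      Function.injective_of_subsingleton (α := Fin 1) _, by simp [prodC_self, walkWeight]⟩
  | cons t l ih =>
    obtain ⟨m, -, hm⟩ := Finset.exists_mem_eq_inf Finset.univ ⟨h, Finset.mem_univ h⟩
      fun m => call t.1 t.2.1 t.2.2 h m + prodC l m i
    have hsplit : prodC (t :: l) h i = call t.1 t.2.1 t.2.2 h m + prodC l m i := hm
    obtain ⟨hcall, hrest⟩ := ENNReal.add_ne_top.1 (hsplit ▸ hfin)
    obtain ⟨s, k, v, hw, hv, hwt⟩ := ih m hrest
    rcases eq_or_joins_of_call_ne_top hcall with rfl | ⟨ht, hcall_eq⟩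
    · refine ⟨s, Fin.succ ∘ k, v, hw.succ t, hv, ?_⟩
      rw [hsplit, call_self, zero_add, hwt]
      rfl
    by_cases hvisited : h ∈ Set.range v
    · obtain ⟨j, rfl⟩ := hvisited
      obtain ⟨s', k', v', hw', hv', hle⟩ := hw.exists_injective_suffix hv j
      refine ⟨s', Fin.succ ∘ k', v', hw'.succ t, hv',
        le_antisymm (hw'.succ t).prodC_le_walkWeight ?_⟩
      calc walkWeight (t :: l) (Fin.succ ∘ k') = walkWeight l k' := rfl
        _ ≤ prodC l m i := hwt ▸ hle
        _ ≤ prodC (t :: l) (v j) i := hsplit ▸ le_add_self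
    · exact ⟨s + 1, _, _, hw.cons ht, Fin.cons_injective_of_injective hvisited hv,
        by rw [hsplit, hcall_eq, hwt, walkWeight_cons_zero_succ]⟩

theorem entry_eq_min_walk_general {n : ℕ}
    (l : List (Fin n × Fin n × ℝ≥0∞))
    (h i : Fin n) (hfin : prodC l h i ≠ ⊤) :
    prodC l h i = sInf (walkValues l h i) ∧
    ∃ (s : ℕ) (k : Fin s → Fin l.length) (v : Fin (s + 1) → Fin n),
      StrictMono k ∧ v 0 = h ∧ v (Fin.last s) = i ∧
      (∀ r : Fin s,
        ((l.get (k r)).1 = v r.castSucc ∧ (l.get (k r)).2.1 = v r.succ) ∨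
        ((l.get (k r)).1 = v r.succ ∧ (l.get (k r)).2.1 = v r.castSucc)) ∧
      Function.Injective v ∧ s ≤ n - 1 ∧
      prodC l h i = ∑ r : Fin s, (l.get (k r)).2.2 := by
  obtain ⟨s, k, v, ⟨hk, hv0, hvs, hj⟩, hv, hwt⟩ :=
    exists_injective_isCallWalk_of_prodC_ne_top l h i hfin
  have hs : s + 1 ≤ n := by simpa using Fintype.card_le_of_injective v hv
  refine ⟨le_antisymm ?_ (sInf_le ⟨s, k, v, hk, hv0, hvs, hj, hwt⟩),
    s, k, v, hk, hv0, hvs, hj, hv, by omega, hwt⟩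
  refine le_sInf ?_
  rintro c ⟨s', k', v', hk', hv0', hvs', hj', rfl⟩
  exact IsCallWalk.prodC_le_walkWeight ⟨hk', hv0', hvs', hj'⟩

theorem entry_eq_min_walk {n : ℕ}
    (l : List (Fin n × Fin n × ℝ≥0∞)) (hd : ∀ t ∈ l, t.1 ≠ t.2.1)
    (h i : Fin n) (hfin : prodC l h i ≠ ⊤) :
    prodC l h i = sInf (walkValues l h i) ∧
    ∃ (s : ℕ) (k : Fin s → Fin l.length) (v : Fin (s + 1) → Fin n),
      StrictMono k ∧ v 0 = h ∧ v (Fin.last s) = i ∧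
      (∀ r : Fin s,
        ((l.get (k r)).1 = v r.castSucc ∧ (l.get (k r)).2.1 = v r.succ) ∨
        ((l.get (k r)).1 = v r.succ ∧ (l.get (k r)).2.1 = v r.castSucc)) ∧
      Function.Injective v ∧ s ≤ n - 1 ∧
      prodC l h i = ∑ r : Fin s, (l.get (k r)).2.2 :=
  entry_eq_min_walk_general l h i hfin
end
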